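/- arXiv:1411.5464 — 10 statements merged into one kernel-verified Lean document; each statement's English description precedes it below -/
import Mathlib

section
/- For all columns a, b, c over A: if a ∨ b = a ∨ c and a ∧ b = a ∧ c, then b = c. -/
/-- One step of Schensted's column matching: try to match the letter `x`
to the smallest still-unmatched letter `y` of the state with `x ≤ y`.
The state is `(remaining unmatched letters of b, matched letters of b)`. -/
def matchStep {n : ℕ} (x : Fin n) (st : Finset (Fin n) × Finset (Fin n)) :
    Finset (Fin n) × Finset (Fin n) :=
  let cand := st.1.filter (fun y => x ≤ y)
  if h : cand.Nonempty then (st.1.erase (cand.min' h), insert (cand.min' h) st.2)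
  else st

/-- `colMatch a b` is the set `b_a` of connected (matched) letters of the column `b`,
obtained by scanning the letters of the column `a` in increasing order and matching
each letter `x` of `a` to the smallest not-yet-matched letter `y` of `b` with `y ≥ x`. -/
def colMatch {n : ℕ} (a b : Finset (Fin n)) : Finset (Fin n) :=
  ((a.sort (· ≤ ·)).foldl (fun st x => matchStep x st) (b, (∅ : Finset (Fin n)))).2

/-- The column `a ∨ b`, with letter set `{a} ∪ b^a`. -/
def vee {n : ℕ} (a b : Finset (Fin n)) : Finset (Fin n) := a ∪ (b \ colMatch a b)

/-- The column `a ∧ b`, with letter set `b_a`. -/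
def wedge {n : ℕ} (a b : Finset (Fin n)) : Finset (Fin n) := colMatch a b

lemma matchStep_union {n : ℕ} (x : Fin n) (st : Finset (Fin n) × Finset (Fin n)) :
    (matchStep x st).1 ∪ (matchStep x st).2 = st.1 ∪ st.2 := by
  unfold matchStep
  dsimp only
  split
  · next h =>
    have hm : (st.1.filter (fun y => x ≤ y)).min' h ∈ st.1 :=
      (Finset.mem_filter.mp (Finset.min'_mem _ h)).1
    ext z
    simp only [Finset.mem_union, Finset.mem_erase, Finset.mem_insert]
    constructor
    · rintro (⟨_, hz⟩ | (rfl | hz)) <;> tauto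
    · rintro (hz | hz)
      · by_cases hzm : z = (st.1.filter (fun y => x ≤ y)).min' h <;> tauto
      · tauto
  · rfl

lemma foldl_matchStep_union {n : ℕ} (l : List (Fin n)) (st : Finset (Fin n) × Finset (Fin n)) :
    (l.foldl (fun st x => matchStep x st) st).1 ∪ (l.foldl (fun st x => matchStep x st) st).2
      = st.1 ∪ st.2 := by
  induction l generalizing st with
  | nil => rfl
  | cons y l ih => simpa [ih (matchStep y st)] using matchStep_union y st

lemma matchStep_fst_subset {n : ℕ} (x : Fin n) (st : Finset (Fin n) × Finset (Fin n)) :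
    (matchStep x st).1 ⊆ st.1 := by
  unfold matchStep
  dsimp only
  split
  · exact Finset.erase_subset _ _
  · exact Finset.Subset.refl _

lemma foldl_matchStep_fst_subset {n : ℕ} (l : List (Fin n))
    (st : Finset (Fin n) × Finset (Fin n)) :
    (l.foldl (fun st x => matchStep x st) st).1 ⊆ st.1 := by
  induction l generalizing st with
  | nil => exact Finset.Subset.refl _
  | cons y l ih => exact (ih (matchStep y st)).trans (matchStep_fst_subset y st)

lemma not_mem_matchStep_fst {n : ℕ} (x : Fin n) (st : Finset (Fin n) × Finset (Fin n)) :
    x ∉ (matchStep x st).1 := by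
  unfold matchStep
  dsimp only
  split
  · next h =>
    intro hx
    have hx' := Finset.mem_erase.mp hx
    have hxc : x ∈ st.1.filter (fun y => x ≤ y) := Finset.mem_filter.mpr ⟨hx'.2, le_refl x⟩
    have h1 : (st.1.filter (fun y => x ≤ y)).min' h ≤ x := Finset.min'_le _ _ hxc
    have h2 : x ≤ (st.1.filter (fun y => x ≤ y)).min' h :=
      (Finset.mem_filter.mp (Finset.min'_mem _ h)).2
    exact hx'.1 (le_antisymm h1 h2).symm
  · next h =>
    intro hx
    exact h ⟨x, Finset.mem_filter.mpr ⟨hx, le_refl x⟩⟩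

lemma not_mem_foldl_fst {n : ℕ} (l : List (Fin n)) (st : Finset (Fin n) × Finset (Fin n))
    (x : Fin n) (hx : x ∈ l) : x ∉ (l.foldl (fun st x => matchStep x st) st).1 := by
  induction l generalizing st with
  | nil => simp at hx
  | cons y l ih =>
    rcases List.mem_cons.mp hx with rfl | hx
    · intro hmem
      exact not_mem_matchStep_fst x st (foldl_matchStep_fst_subset l _ hmem)
    · exact ih (matchStep y st) hx

lemma colMatch_subset {n : ℕ} (a b : Finset (Fin n)) : colMatch a b ⊆ b := by
  intro x hx
  have h := foldl_matchStep_union (a.sort (· ≤ ·)) (b, (∅ : Finset (Fin n)))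
  have : x ∈ b ∪ (∅ : Finset (Fin n)) := h ▸ Finset.mem_union_right _ hx
  simpa using this

lemma inter_subset_colMatch {n : ℕ} (a b : Finset (Fin n)) : a ∩ b ⊆ colMatch a b := by
  intro x hx
  rcases Finset.mem_inter.mp hx with ⟨hxa, hxb⟩
  have hxl : x ∈ a.sort (· ≤ ·) := (Finset.mem_sort _).mpr hxa
  have hnot := not_mem_foldl_fst (a.sort (· ≤ ·)) (b, (∅ : Finset (Fin n))) x hxl
  have h := foldl_matchStep_union (a.sort (· ≤ ·)) (b, (∅ : Finset (Fin n)))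
  have hxub : x ∈ b ∪ (∅ : Finset (Fin n)) := by simpa using hxb
  have := h ▸ hxub
  rcases Finset.mem_union.mp this with h1 | h2
  · exact absurd h1 hnot
  · exact h2

lemma reconstruct {n : ℕ} (a b : Finset (Fin n)) :
    b = (vee a b \ a) ∪ wedge a b := by
  unfold vee wedge
  ext x
  simp only [Finset.mem_union, Finset.mem_sdiff]
  constructor
  · intro hx
    by_cases hm : x ∈ colMatch a b
    · exact Or.inr hm
    · refine Or.inl ⟨Or.inr ⟨hx, hm⟩, fun hxa => hm ?_⟩
      exact inter_subset_colMatch a b (Finset.mem_inter.mpr ⟨hxa, hx⟩)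
  · rintro (⟨(hxa | ⟨hxb, _⟩), hna⟩ | hm)
    · exact absurd hxa hna
    · exact hxb
    · exact colMatch_subset a b hm

/-- For all columns `a, b, c` over `A`: if `a ∨ b = a ∨ c` and `a ∧ b = a ∧ c`, then `b = c`. -/
theorem vee_wedge_right_cancel (n : ℕ) (hn : 1 ≤ n) (a b c : Finset (Fin n))
    (h1 : vee a b = vee a c) (h2 : wedge a b = wedge a c) : b = c := by
  rw [reconstruct a b, reconstruct a c, h1, h2]
end

section
/- For all columns a, b, d over A: if a ∨ d = b ∨ d and a ∧ d = b ∧ d, then a = b. -/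
lemma matchStep_snd_subset {n : ℕ} (x : Fin n) (st : Finset (Fin n) × Finset (Fin n)) :
    st.2 ⊆ (matchStep x st).2 := by
  unfold matchStep
  dsimp only
  split
  · exact Finset.subset_insert _ _
  · exact subset_rfl

lemma foldl_snd_subset {n : ℕ} (l : List (Fin n)) (st : Finset (Fin n) × Finset (Fin n)) :
    st.2 ⊆ (l.foldl (fun st x => matchStep x st) st).2 := by
  induction l generalizing st with
  | nil => exact subset_rfl
  | cons y t ih => exact (matchStep_snd_subset y st).trans (ih _)

lemma mem_foldl_snd {n : ℕ} (l : List (Fin n)) (st : Finset (Fin n) × Finset (Fin n))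
    (x : Fin n) (hx : x ∈ l) (hmem : x ∈ st.1 ∪ st.2) :
    x ∈ (l.foldl (fun st x => matchStep x st) st).2 := by
  induction l generalizing st with
  | nil => cases hx
  | cons y t ih =>
    rcases List.mem_cons.1 hx with rfl | hx'
    · -- show x ∈ (matchStep x st).2, then use mono
      apply foldl_snd_subset t (matchStep x st)
      rcases Finset.mem_union.1 hmem with h1 | h2
      · unfold matchStep
        have hc : x ∈ st.1.filter (fun y => x ≤ y) := Finset.mem_filter.2 ⟨h1, le_refl x⟩
        have hne : (st.1.filter (fun y => x ≤ y)).Nonempty := ⟨x, hc⟩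
        have heq : (st.1.filter (fun y => x ≤ y)).min' hne = x := by
          apply le_antisymm (Finset.min'_le _ _ hc)
          exact (Finset.mem_filter.1 (Finset.min'_mem _ hne)).2
        rw [dif_pos hne]
        simp [heq]
      · exact matchStep_snd_subset x st h2
    · apply ih _ hx'
      rw [matchStep_union]; exact hmem

lemma self_inter_compl_eq {n : ℕ} (a d : Finset (Fin n)) :
    a ∩ (d \ colMatch a d) = ∅ := by
  ext x
  simp only [Finset.mem_inter, Finset.mem_sdiff, Finset.notMem_empty, iff_false]
  rintro ⟨hxa, hxd, hxm⟩
  exact hxm (mem_foldl_snd _ (d, ∅) x ((Finset.mem_sort _).2 hxa) (by simp [hxd]))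

lemma eq_vee_sdiff {n : ℕ} (a d : Finset (Fin n)) :
    a = vee a d \ (d \ colMatch a d) := by
  have h := self_inter_compl_eq a d
  ext x
  simp only [vee, Finset.mem_sdiff, Finset.mem_union]
  constructor
  · intro hxa
    refine ⟨Or.inl hxa, fun hx => ?_⟩
    have : x ∈ a ∩ (d \ colMatch a d) := Finset.mem_inter.2 ⟨hxa, Finset.mem_sdiff.2 hx⟩
    simp [h] at this
  · rintro ⟨hx | hx, hnx⟩
    · exact hx
    · exact absurd hx hnx

/-- For all columns `a, b, d` over `A`: if `a ∨ d = b ∨ d` and `a ∧ d = b ∧ d`, then `a = b`. -/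
theorem vee_wedge_left_cancel (n : ℕ) (hn : 1 ≤ n) (a b d : Finset (Fin n))
    (h1 : vee a d = vee b d) (h2 : wedge a d = wedge b d) : a = b := by
  have hm : colMatch a d = colMatch b d := h2
  rw [eq_vee_sdiff a d, eq_vee_sdiff b d, h1, hm]
end

section
/- For every column a over A: a ∨ a = a and a ∧ a = a. -/
lemma foldl_self {n : ℕ} (l : List (Fin n)) (hl : l.Pairwise (· < ·)) (t : Finset (Fin n)) :
    l.foldl (fun st x => matchStep x st) (l.toFinset, t) = (∅, t ∪ l.toFinset) := by
  induction l generalizing t with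
  | nil => simp
  | cons x xs ih =>
    have hx : x ∉ xs.toFinset := by
      simp only [List.mem_toFinset]
      intro hmem
      exact lt_irrefl x ((List.pairwise_cons.1 hl).1 x hmem)
    have hfilter : (List.toFinset (x :: xs)).filter (fun y => x ≤ y)
        = List.toFinset (x :: xs) := by
      apply Finset.filter_true_of_mem
      intro y hy
      simp only [List.toFinset_cons, Finset.mem_insert, List.mem_toFinset] at hy
      rcases hy with rfl | hy
      · exact le_refl y
      · exact le_of_lt ((List.pairwise_cons.1 hl).1 y hy)
    have hne : ((List.toFinset (x :: xs)).filter (fun y => x ≤ y)).Nonempty := by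
      rw [hfilter]; exact ⟨x, by simp⟩
    have hmin : ((List.toFinset (x :: xs)).filter (fun y => x ≤ y)).min' hne = x := by
      apply le_antisymm
      · exact Finset.min'_le _ x (by rw [hfilter]; simp)
      · exact (Finset.mem_filter.1 (Finset.min'_mem _ hne)).2
    have hstep : matchStep x (List.toFinset (x :: xs), t) = (xs.toFinset, insert x t) := by
      unfold matchStep
      simp only
      rw [dif_pos hne, hmin]
      congr 1
      rw [List.toFinset_cons, Finset.erase_insert hx]
    have hsorted : xs.Pairwise (· < ·) := (List.pairwise_cons.1 hl).2
    calc (x :: xs).foldl (fun st x => matchStep x st) (List.toFinset (x :: xs), t)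
        = xs.foldl (fun st x => matchStep x st) (xs.toFinset, insert x t) := by
          rw [List.foldl_cons, hstep]
      _ = (∅, insert x t ∪ xs.toFinset) := ih hsorted (insert x t)
      _ = (∅, t ∪ List.toFinset (x :: xs)) := by
          congr 1
          rw [List.toFinset_cons]
          ext y; simp [or_comm, or_left_comm]

lemma colMatch_self {n : ℕ} (a : Finset (Fin n)) : colMatch a a = a := by
  unfold colMatch
  have h1 : (a.sort (· ≤ ·)).toFinset = a := Finset.sort_toFinset a _
  have h2 : (a.sort (· ≤ ·)).Pairwise (· < ·) := by
    exact ((Finset.pairwise_sort a _).and (Finset.sort_nodup a _)).imp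
      (fun h => lt_of_le_of_ne h.1 h.2)
  have := foldl_self (a.sort (· ≤ ·)) h2 ∅
  rw [h1] at this
  rw [this]
  simp [h1]

/-- For every column `a` over `A`: `a ∨ a = a` and `a ∧ a = a`. -/
theorem vee_self_and_wedge_self (n : ℕ) (hn : 1 ≤ n) (a : Finset (Fin n)) :
    vee a a = a ∧ wedge a a = a := by
  constructor
  · simp [vee, colMatch_self]
  · simp [wedge, colMatch_self]
end

section
/- For all columns a, b over A: a ∨ (a ∧ b) = a, a ∧ (a ∨ b) = a, (a ∧ b) ∨ b = b, and (a ∨ b) ∧ b = b. -/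
namespace SchAux

variable {n : ℕ}

/-- Recursive form of the column matching. -/
def lmatch : List (Fin n) → Finset (Fin n) → Finset (Fin n)
  | [], _ => ∅
  | x :: l, v =>
    if h : (v.filter (fun y => x ≤ y)).Nonempty then
      insert ((v.filter (fun y => x ≤ y)).min' h)
        (lmatch l (v.erase ((v.filter (fun y => x ≤ y)).min' h)))
    else lmatch l v

lemma foldl_snd (l : List (Fin n)) : ∀ v m : Finset (Fin n),
    (l.foldl (fun st x => matchStep x st) (v, m)).2 = m ∪ lmatch l v := by
  induction l with
  | nil => intro v m; simp [lmatch]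
  | cons x l ih =>
    intro v m
    by_cases h : (v.filter (fun y => x ≤ y)).Nonempty
    · have hstep : matchStep x (v, m) =
          (v.erase ((v.filter (fun y => x ≤ y)).min' h),
            insert ((v.filter (fun y => x ≤ y)).min' h) m) := by
        simp only [matchStep, dif_pos h]
      rw [List.foldl_cons, hstep, ih, lmatch, dif_pos h,
        Finset.insert_union, Finset.union_insert]
    · have hstep : matchStep x (v, m) = (v, m) := by
        simp only [matchStep, dif_neg h]
      rw [List.foldl_cons, hstep, ih, lmatch, dif_neg h]

lemma colMatch_eq (a b : Finset (Fin n)) :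
    colMatch a b = lmatch (a.sort (· ≤ ·)) b := by
  rw [colMatch, foldl_snd, Finset.empty_union]

lemma lmatch_subset (l : List (Fin n)) : ∀ v, lmatch l v ⊆ v := by
  induction l with
  | nil => intro v; simp [lmatch]
  | cons x l ih =>
    intro v
    rw [lmatch]
    by_cases h : (v.filter (fun y => x ≤ y)).Nonempty
    · rw [dif_pos h]
      have hy : (v.filter (fun y => x ≤ y)).min' h ∈ v :=
        Finset.mem_of_mem_filter _ ((v.filter (fun y => x ≤ y)).min'_mem h)
      intro z hz
      rcases Finset.mem_insert.1 hz with rfl | hz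
      · exact hy
      · exact Finset.erase_subset _ _ (ih _ hz)
    · rw [dif_neg h]; exact ih v

lemma lmatch_cons_self {u : Fin n} {v : Finset (Fin n)} (hu : u ∈ v) (l : List (Fin n)) :
    lmatch (u :: l) v = insert u (lmatch l (v.erase u)) := by
  have hne : (v.filter (fun y => u ≤ y)).Nonempty :=
    ⟨u, Finset.mem_filter.2 ⟨hu, le_refl u⟩⟩
  have hmin : (v.filter (fun y => u ≤ y)).min' hne = u := by
    apply le_antisymm
    · exact Finset.min'_le _ _ (Finset.mem_filter.2 ⟨hu, le_refl u⟩)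
    · exact (Finset.mem_filter.1 ((v.filter (fun y => u ≤ y)).min'_mem hne)).2
  rw [lmatch, dif_pos hne, hmin]

/-- matching a sorted list that is contained in `v` matches it entirely, onto itself. -/
lemma lmatch_self : ∀ (l : List (Fin n)), l.Pairwise (· < ·) → ∀ v : Finset (Fin n),
    l.toFinset ⊆ v → lmatch l v = l.toFinset := by
  intro l
  induction l with
  | nil => intro _ v _; simp [lmatch]
  | cons x l ih =>
    intro hs v hsub
    have hx : x ∈ v := hsub (by simp)
    rw [lmatch_cons_self hx, List.toFinset_cons]
    congr 1
    apply ih hs.of_cons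
    intro z hz
    have hzl := List.mem_toFinset.1 hz
    have : x < z := (List.pairwise_cons.1 hs).1 z hzl
    exact Finset.mem_erase.2 ⟨ne_of_gt this, hsub (by simp [hzl])⟩

/-- matching the same list again into the matched set matches everything. -/
lemma lmatch_idem : ∀ (l : List (Fin n)) (v : Finset (Fin n)),
    lmatch l (lmatch l v) = lmatch l v := by
  intro l
  induction l with
  | nil => intro v; simp [lmatch]
  | cons x l ih =>
    intro v
    by_cases h : (v.filter (fun y => x ≤ y)).Nonempty
    · set y := (v.filter (fun y => x ≤ y)).min' h with hy
      have hyv : y ∈ v := Finset.mem_of_mem_filter _ ((v.filter _).min'_mem h)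
      have hxy : x ≤ y := (Finset.mem_filter.1 ((v.filter _).min'_mem h)).2
      have hM : lmatch (x :: l) v = insert y (lmatch l (v.erase y)) := by
        rw [lmatch, dif_pos h]
      set M' := lmatch l (v.erase y) with hM'
      have hM'sub : M' ⊆ v.erase y := lmatch_subset l _
      have hyM' : y ∉ M' := fun hmem => (Finset.mem_erase.1 (hM'sub hmem)).1 rfl
      rw [hM]
      have hne2 : ((insert y M').filter (fun z => x ≤ z)).Nonempty :=
        ⟨y, Finset.mem_filter.2 ⟨Finset.mem_insert_self _ _, hxy⟩⟩
      have hmin2 : ((insert y M').filter (fun z => x ≤ z)).min' hne2 = y := by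
        apply le_antisymm
        · exact Finset.min'_le _ _ (Finset.mem_filter.2 ⟨Finset.mem_insert_self _ _, hxy⟩)
        · apply Finset.le_min'
          intro z hz
          rcases Finset.mem_filter.1 hz with ⟨hzM, hxz⟩
          rcases Finset.mem_insert.1 hzM with rfl | hzM'
          · exact le_refl _
          · exact Finset.min'_le _ _
              (Finset.mem_filter.2 ⟨(Finset.mem_erase.1 (hM'sub hzM')).2, hxz⟩)
      rw [lmatch, dif_pos hne2, hmin2, Finset.erase_insert hyM', ih]
    · have hM : lmatch (x :: l) v = lmatch l v := by rw [lmatch, dif_neg h]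
      rw [hM]
      have hsub : lmatch l v ⊆ v := lmatch_subset l v
      have h2 : ¬ ((lmatch l v).filter (fun y => x ≤ y)).Nonempty := by
        intro ⟨z, hz⟩
        rcases Finset.mem_filter.1 hz with ⟨hzM, hxz⟩
        exact h ⟨z, Finset.mem_filter.2 ⟨hsub hzM, hxz⟩⟩
      rw [lmatch, dif_neg h2, ih]

/-- erasing an element smaller than everything in the list doesn't change the matching. -/
lemma lmatch_erase {u : Fin n} : ∀ (l : List (Fin n)), (∀ z ∈ l, ¬ z ≤ u) →
    ∀ v : Finset (Fin n), lmatch l (v.erase u) = lmatch l v := by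
  intro l
  induction l with
  | nil => intro _ v; simp [lmatch]
  | cons x l ih =>
    intro hl v
    have hxu : ¬ x ≤ u := hl x (by simp)
    have hfe : (v.erase u).filter (fun y => x ≤ y) = v.filter (fun y => x ≤ y) := by
      rw [Finset.filter_erase]
      apply Finset.erase_eq_of_notMem
      intro hm; exact hxu (Finset.mem_filter.1 hm).2
    by_cases h : (v.filter (fun y => x ≤ y)).Nonempty
    · have h' : ((v.erase u).filter (fun y => x ≤ y)).Nonempty := by rw [hfe]; exact h
      rw [lmatch, dif_pos h', lmatch, dif_pos h]
      have hmins : ((v.erase u).filter (fun y => x ≤ y)).min' h'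
          = (v.filter (fun y => x ≤ y)).min' h := by
        congr 1
      rw [hmins, Finset.erase_right_comm (a := u)]
      congr 1
      exact ih (fun z hz => hl z (by simp [hz])) _
    · have h' : ¬ ((v.erase u).filter (fun y => x ≤ y)).Nonempty := by rw [hfe]; exact h
      rw [lmatch, dif_neg h', lmatch, dif_neg h]
      exact ih (fun z hz => hl z (by simp [hz])) v

lemma mem_lmatch : ∀ (l : List (Fin n)) (v : Finset (Fin n)) (x : Fin n),
    x ∈ l → x ∈ v → x ∈ lmatch l v := by
  intro l
  induction l with
  | nil => intro v x hx; simp at hx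
  | cons z l ih =>
    intro v x hx hv
    by_cases h : (v.filter (fun y => z ≤ y)).Nonempty
    · rw [lmatch, dif_pos h]
      set y := (v.filter (fun y => z ≤ y)).min' h with hy
      by_cases hxy : x = y
      · simp [hxy]
      · rcases List.mem_cons.1 hx with rfl | hxl
        · -- x = z; then y = x since x ∈ filter and y is min ≥ x
          exfalso
          have hxf : x ∈ v.filter (fun y => x ≤ y) := Finset.mem_filter.2 ⟨hv, le_refl x⟩
          have h1 : y ≤ x := Finset.min'_le _ _ hxf
          have h2 : x ≤ y := (Finset.mem_filter.1 ((v.filter _).min'_mem h)).2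
          exact hxy (le_antisymm h2 h1)
        · exact Finset.mem_insert.2 (Or.inr (ih _ x hxl (Finset.mem_erase.2 ⟨hxy, hv⟩)))
    · rw [lmatch, dif_neg h]
      rcases List.mem_cons.1 hx with rfl | hxl
      · exact absurd ⟨x, Finset.mem_filter.2 ⟨hv, le_refl x⟩⟩ h
      · exact ih v x hxl hv

/-- merge of two lists -/
def mrg : List (Fin n) → List (Fin n) → List (Fin n)
  | [], t => t
  | s, [] => s
  | x :: s, u :: t =>
    if x ≤ u then x :: mrg s (u :: t) else u :: mrg (x :: s) t
  termination_by s t => s.length + t.length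

lemma mrg_perm : ∀ (s t : List (Fin n)), (mrg s t).Perm (s ++ t) := by
  intro s t
  induction s, t using mrg.induct with
  | case1 t => simp [mrg]
  | case2 s => cases s <;> simp [mrg]
  | case3 x s u t hle ih =>
    rw [mrg, if_pos hle]
    exact (ih.cons x)
  | case4 x s u t hle ih =>
    rw [mrg, if_neg hle]
    refine (ih.cons u).trans ?_
    exact (List.perm_middle).symm

lemma mrg_sorted : ∀ (s t : List (Fin n)), s.Pairwise (· ≤ ·) → t.Pairwise (· ≤ ·) →
    (mrg s t).Pairwise (· ≤ ·) := by
  intro s t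
  induction s, t using mrg.induct with
  | case1 t => intro _ ht; simpa [mrg]
  | case2 s => intro hs _; cases s <;> simp_all [mrg, List.pairwise_cons]
  | case3 x s u t hle ih =>
    intro hs ht
    rw [mrg, if_pos hle]
    rw [List.pairwise_cons]
    constructor
    · intro b hb
      have := (mrg_perm s (u :: t)).mem_iff.1 hb
      rcases List.mem_append.1 this with h1 | h1
      · exact (List.pairwise_cons.1 hs).1 b h1
      · rcases List.mem_cons.1 h1 with rfl | h1
        · exact hle
        · exact le_trans hle ((List.pairwise_cons.1 ht).1 b h1)
    · exact ih hs.of_cons ht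
  | case4 x s u t hle ih =>
    intro hs ht
    rw [mrg, if_neg hle]
    rw [List.pairwise_cons]
    have hux : u ≤ x := le_of_not_ge hle
    constructor
    · intro b hb
      have := (mrg_perm (x :: s) t).mem_iff.1 hb
      rcases List.mem_append.1 this with h1 | h1
      · rcases List.mem_cons.1 h1 with rfl | h1
        · exact hux
        · exact le_trans hux ((List.pairwise_cons.1 hs).1 b h1)
      · exact (List.pairwise_cons.1 ht).1 b h1
    · exact ih hs ht.of_cons

/-- Key merge lemma. -/
lemma lmatch_mrg : ∀ (s t : List (Fin n)) (v : Finset (Fin n)),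
    s.Pairwise (· < ·) → t.Pairwise (· < ·) → t.toFinset ⊆ v →
    Disjoint (lmatch s v) t.toFinset →
    lmatch (mrg s t) v = lmatch s v ∪ t.toFinset := by
  intro s t
  induction s, t using mrg.induct with
  | case1 t =>
    intro v _ ht hsub _
    simp only [mrg, lmatch]
    rw [lmatch_self t ht v hsub, Finset.empty_union]
  | case2 s =>
    intro v _ _ _ _
    cases s <;> simp [mrg, lmatch]
  | case3 x s u t hle ih =>
    intro v hs ht hsub hdisj
    rw [mrg, if_pos hle]
    by_cases h : (v.filter (fun y => x ≤ y)).Nonempty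
    · set y := (v.filter (fun y => x ≤ y)).min' h with hy
      have hMv : lmatch (x :: s) v = insert y (lmatch s (v.erase y)) := by
        rw [lmatch, dif_pos h]
      have hyM : y ∈ lmatch (x :: s) v := by rw [hMv]; exact Finset.mem_insert_self _ _
      rw [lmatch, dif_pos h, ← hy]
      have hsub' : (u :: t).toFinset ⊆ v.erase y := by
        intro z hz
        refine Finset.mem_erase.2 ⟨?_, hsub hz⟩
        intro hzy; subst hzy
        exact (Finset.disjoint_left.1 hdisj hyM) hz
      have hdisj' : Disjoint (lmatch s (v.erase y)) (u :: t).toFinset := by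
        apply Finset.disjoint_left.2
        intro z hz
        exact Finset.disjoint_left.1 hdisj (hMv ▸ Finset.mem_insert.2 (Or.inr hz))
      rw [ih _ hs.of_cons ht hsub' hdisj', hMv, Finset.insert_union]
    · rw [lmatch, dif_neg h]
      have hMv : lmatch (x :: s) v = lmatch s v := by rw [lmatch, dif_neg h]
      rw [ih _ hs.of_cons ht hsub (hMv ▸ hdisj), hMv]
  | case4 x s u t hle ih =>
    intro v hs ht hsub hdisj
    rw [mrg, if_neg hle]
    have hux : u < x := lt_of_not_ge hle
    have huv : u ∈ v := hsub (by simp)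
    rw [lmatch_cons_self huv]
    have hall : ∀ z ∈ mrg (x :: s) t, ¬ z ≤ u := by
      intro z hz
      rcases List.mem_append.1 ((mrg_perm (x :: s) t).mem_iff.1 hz) with h1 | h1
      · rcases List.mem_cons.1 h1 with rfl | h1
        · exact not_le_of_gt hux
        · exact not_le_of_gt (lt_trans hux ((List.pairwise_cons.1 hs).1 z h1))
      · exact not_le_of_gt ((List.pairwise_cons.1 ht).1 z h1)
    rw [lmatch_erase _ hall]
    have hsub' : t.toFinset ⊆ v := fun z hz => hsub (by simp [List.mem_toFinset.1 hz])
    have hdisj' : Disjoint (lmatch (x :: s) v) t.toFinset := by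
      apply Finset.disjoint_left.2
      intro z hz
      exact fun hzt => Finset.disjoint_left.1 hdisj hz (by simp [List.mem_toFinset.1 hzt])
    rw [ih _ hs ht.of_cons hsub' hdisj']
    rw [List.toFinset_cons, Finset.union_insert]

end SchAux

open SchAux

/-- For all columns `a, b` over `A`:
`a ∨ (a ∧ b) = a`, `a ∧ (a ∨ b) = a`, `(a ∧ b) ∨ b = b`, and `(a ∨ b) ∧ b = b`. -/
theorem absorption_laws (n : ℕ) (hn : 1 ≤ n) (a b : Finset (Fin n)) :
    vee a (wedge a b) = a ∧ wedge a (vee a b) = a ∧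
    vee (wedge a b) b = b ∧ wedge (vee a b) b = b := by
  set M := colMatch a b with hM
  have hMl : M = lmatch (a.sort (· ≤ ·)) b := colMatch_eq a b
  have hMsub : M ⊆ b := hMl ▸ lmatch_subset _ b
  refine ⟨?_, ?_, ?_, ?_⟩
  · -- vee a (wedge a b) = a
    have h1 : colMatch a M = M := by
      rw [colMatch_eq, hMl, lmatch_idem]
    rw [vee, wedge, ← hM, h1, Finset.sdiff_self, Finset.union_empty]
  · -- wedge a (vee a b) = a
    rw [wedge, vee, ← hM, colMatch_eq]
    rw [lmatch_self _ ((Finset.sortedLT_sort a).pairwise)]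
    · exact Finset.sort_toFinset a _
    · rw [Finset.sort_toFinset]
      exact Finset.subset_union_left
  · -- vee (wedge a b) b = b
    rw [vee, wedge, ← hM, colMatch_eq]
    rw [lmatch_self _ ((Finset.sortedLT_sort M).pairwise) b (by rw [Finset.sort_toFinset]; exact hMsub)]
    rw [Finset.sort_toFinset]
    exact Finset.union_sdiff_of_subset hMsub
  · -- wedge (vee a b) b = b
    set U := b \ M with hU
    have hdisj : Disjoint a U := by
      rw [Finset.disjoint_left]
      intro x hxa hxU
      rcases Finset.mem_sdiff.1 hxU with ⟨hxb, hxM⟩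
      exact hxM (hMl ▸ mem_lmatch _ b x ((Finset.mem_sort _).2 hxa) hxb)
    have hsorteq : (a ∪ U).sort (· ≤ ·) = mrg (a.sort (· ≤ ·)) (U.sort (· ≤ ·)) := by
      apply List.Perm.eq_of_pairwise' (Finset.pairwise_sort _ _)
        (mrg_sorted _ _ (Finset.pairwise_sort _ _) (Finset.pairwise_sort _ _))
      apply Multiset.coe_eq_coe.1
      have h1 : ((mrg (a.sort (· ≤ ·)) (U.sort (· ≤ ·)) : List (Fin n)) : Multiset (Fin n))
          = ((a.sort (· ≤ ·) ++ U.sort (· ≤ ·) : List (Fin n)) : Multiset (Fin n)) :=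
        Multiset.coe_eq_coe.2 (mrg_perm _ _)
      rw [Finset.sort_eq, h1, ← Multiset.coe_add, Finset.sort_eq, Finset.sort_eq]
      rw [← Finset.disjUnion_eq_union a U hdisj]
      rfl
    rw [wedge, vee, ← hM, ← hU, colMatch_eq, hsorteq]
    rw [lmatch_mrg _ _ b ((Finset.sortedLT_sort a).pairwise) ((Finset.sortedLT_sort U).pairwise)
      (by rw [Finset.sort_toFinset]; exact Finset.sdiff_subset)
      (by rw [Finset.sort_toFinset, ← hMl]; exact Finset.disjoint_sdiff)]
    rw [Finset.sort_toFinset, ← hMl]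
    exact Finset.union_sdiff_of_subset hMsub
end

section
/- For all columns a, b, c over A: (a ∨ b) ∨ ((a ∧ b) ∨ c) = a ∨ (b ∨ c). -/
/-- Running minimum of an integer sequence. -/
def rmin (f : ℕ → ℤ) : ℕ → ℤ
  | 0 => f 0
  | t+1 => min (rmin f t) (f (t+1))

lemma rmin_succ (f : ℕ → ℤ) (t : ℕ) : rmin f (t+1) = min (rmin f t) (f (t+1)) := rfl

lemma rmin_le (f : ℕ → ℤ) (t : ℕ) : rmin f t ≤ f t := by
  cases t with
  | zero => exact le_refl _
  | succ t => exact min_le_right _ _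

lemma rmin_congr {f g : ℕ → ℤ} (h : ∀ t, f t = g t) : ∀ t, rmin f t = rmin g t := by
  intro t
  induction t with
  | zero => simpa [rmin] using h 0
  | succ t ih => rw [rmin_succ, rmin_succ, ih, h]

lemma rmin_of_antitone {f : ℕ → ℤ} (h : ∀ t, f (t+1) ≤ f t) : ∀ t, rmin f t = f t := by
  intro t
  induction t with
  | zero => rfl
  | succ t ih => rw [rmin_succ, ih, min_eq_right (h t)]

/-- The key running-minimum identity. -/
lemma walk_identity (D E : ℕ → ℤ) (hD0 : D 0 = 0) (hE0 : E 0 = 0)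
    (hD : ∀ t, D t - 1 ≤ D (t+1) ∧ D (t+1) ≤ D t + 1)
    (hE : ∀ t, E t - 1 ≤ E (t+1) ∧ E (t+1) ≤ E t + 1) (t : ℕ) :
    rmin D t + rmin (fun s => D s - 2 * rmin D s + rmin (fun r => E r + rmin D r) s) t
      = rmin (fun s => D s + rmin E s) t := by
  suffices H : ∀ t,
      rmin D t ≤ D t ∧ rmin E t ≤ E t ∧
      rmin D t + rmin E t ≤ rmin (fun r => E r + rmin D r) t ∧
      rmin (fun r => E r + rmin D r) t ≤ E t + rmin D t ∧
      rmin D t + rmin E t ≤ rmin (fun s => D s + rmin E s) t ∧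
      rmin (fun s => D s + rmin E s) t ≤ D t + rmin E t ∧
      rmin D t + rmin (fun s => D s - 2 * rmin D s + rmin (fun r => E r + rmin D r) s) t
        = rmin (fun s => D s + rmin E s) t ∧
      (rmin (fun r => E r + rmin D r) t = rmin D t + rmin E t ∨
        rmin (fun s => D s + rmin E s) t = rmin D t + rmin E t) by
    exact (H t).2.2.2.2.2.2.1
  intro t
  induction t with
  | zero => simp [rmin, hD0, hE0]
  | succ t ih =>
    obtain ⟨h1, h2, h3, h4, h5, h6, h7, h8⟩ := ih
    have hd := hD t
    have he := hE t
    simp only [rmin_succ]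
    omega


variable {n : ℕ}

/-- Prefix count: number of letters of `S` with value `< t`, as an integer. -/
def Pc (S : Finset (Fin n)) (t : ℕ) : ℤ := ((S.filter (fun (y : Fin n) => (y : ℕ) < t)).card : ℤ)

lemma Pc_zero (S : Finset (Fin n)) : Pc S 0 = 0 := by
  simp [Pc]

lemma filter_val_eq_of_mem {S : Finset (Fin n)} {y : Fin n} (hy : y ∈ S) :
    S.filter (fun (z : Fin n) => (z : ℕ) = (y : ℕ)) = {y} := by
  ext z
  simp only [Finset.mem_filter, Finset.mem_singleton]
  constructor
  · rintro ⟨_, hz⟩; exact Fin.ext hz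
  · rintro rfl; exact ⟨hy, rfl⟩

lemma filter_val_eq_of_not {S : Finset (Fin n)} {t : ℕ} (h : ∀ y ∈ S, (y : ℕ) ≠ t) :
    S.filter (fun (z : Fin n) => (z : ℕ) = t) = ∅ := by
  apply Finset.filter_eq_empty_iff.mpr
  intro y hy
  exact h y hy

lemma Pc_succ (S : Finset (Fin n)) (t : ℕ) :
    Pc S (t+1) = Pc S t + ((S.filter (fun (z : Fin n) => (z : ℕ) = t)).card : ℤ) := by
  unfold Pc
  rw [← Nat.cast_add]
  congr 1
  rw [← Finset.card_union_of_disjoint]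
  · congr 1
    ext z
    simp only [Finset.mem_filter, Finset.mem_union]
    constructor
    · rintro ⟨hz, hlt⟩
      rcases Nat.lt_succ_iff_lt_or_eq.mp hlt with h | h
      · exact Or.inl ⟨hz, h⟩
      · exact Or.inr ⟨hz, h⟩
    · rintro (⟨hz, h⟩ | ⟨hz, h⟩) <;> exact ⟨hz, by omega⟩
  · rw [Finset.disjoint_left]
    rintro z hz1 hz2
    simp only [Finset.mem_filter] at hz1 hz2
    omega

lemma cardf_le_one (S : Finset (Fin n)) (t : ℕ) :
    (S.filter (fun (z : Fin n) => (z : ℕ) = t)).card ≤ 1 := by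
  apply Finset.card_le_one.mpr
  intro y hy z hz
  simp only [Finset.mem_filter] at hy hz
  exact Fin.ext (by omega)

lemma Pc_step (S : Finset (Fin n)) (t : ℕ) :
    Pc S t ≤ Pc S (t+1) ∧ Pc S (t+1) ≤ Pc S t + 1 := by
  rw [Pc_succ]
  have h1 := cardf_le_one S t
  have h0 : (0:ℤ) ≤ ((S.filter (fun (z : Fin n) => (z : ℕ) = t)).card : ℤ) := Nat.cast_nonneg _
  constructor
  · omega
  · have : ((S.filter (fun (z : Fin n) => (z : ℕ) = t)).card : ℤ) ≤ 1 := by exact_mod_cast h1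
    omega

lemma Pc_succ_mem {S : Finset (Fin n)} {y : Fin n} (hy : y ∈ S) :
    Pc S ((y : ℕ)+1) = Pc S (y : ℕ) + 1 := by
  rw [Pc_succ, filter_val_eq_of_mem hy]
  simp

lemma Pc_succ_not {S : Finset (Fin n)} {t : ℕ} (h : ∀ y ∈ S, (y : ℕ) ≠ t) :
    Pc S (t+1) = Pc S t := by
  rw [Pc_succ, filter_val_eq_of_not h]
  simp

lemma mem_iff_Pc {S : Finset (Fin n)} {y : Fin n} :
    y ∈ S ↔ Pc S ((y : ℕ)+1) = Pc S (y : ℕ) + 1 := by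
  constructor
  · exact Pc_succ_mem
  · intro h
    by_contra hy
    have : Pc S ((y : ℕ)+1) = Pc S (y : ℕ) := by
      apply Pc_succ_not
      intro z hz hval
      exact hy ((Fin.ext hval : z = y) ▸ hz)
    omega

lemma Pc_inj {S T : Finset (Fin n)} (h : ∀ t, Pc S t = Pc T t) : S = T := by
  ext y
  rw [mem_iff_Pc, mem_iff_Pc, h, h]

lemma Pc_union_disj {S T : Finset (Fin n)} (h : Disjoint S T) (t : ℕ) :
    Pc (S ∪ T) t = Pc S t + Pc T t := by
  unfold Pc
  rw [Finset.filter_union, Finset.card_union_of_disjoint, Nat.cast_add]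
  exact Finset.disjoint_filter_filter h

lemma Pc_sdiff {S T : Finset (Fin n)} (h : T ⊆ S) (t : ℕ) :
    Pc (S \ T) t = Pc S t - Pc T t := by
  unfold Pc
  have hsub : T.filter (fun (y : Fin n) => (y:ℕ) < t) ⊆ S.filter (fun (y : Fin n) => (y:ℕ) < t) :=
    Finset.filter_subset_filter _ h
  have : (S \ T).filter (fun (y : Fin n) => (y:ℕ) < t)
      = S.filter (fun (y : Fin n) => (y:ℕ) < t) \ T.filter (fun (y : Fin n) => (y:ℕ) < t) := by
    ext z
    simp only [Finset.mem_filter, Finset.mem_sdiff]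
    tauto
  rw [this, Finset.card_sdiff_of_subset hsub]
  have := Finset.card_le_card hsub
  omega

lemma Pc_insert {S : Finset (Fin n)} {x : Fin n} (hx : x ∉ S) (t : ℕ) :
    Pc (insert x S) t = Pc S t + (if (x : ℕ) < t then 1 else 0) := by
  unfold Pc
  rw [Finset.filter_insert]
  by_cases hxt : (x : ℕ) < t
  · rw [if_pos hxt, if_pos hxt, Finset.card_insert_of_notMem]
    · simp
    · intro hmem
      exact hx (Finset.mem_of_mem_filter x hmem)
  · rw [if_neg hxt, if_neg hxt, add_zero]


def hw {n : ℕ} (a b : Finset (Fin n)) (t : ℕ) : ℤ := Pc a t - Pc b t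

def mw {n : ℕ} (a b : Finset (Fin n)) : ℕ → ℤ := rmin (hw a b)

def matchedSet {n : ℕ} (a b : Finset (Fin n)) : Finset (Fin n) :=
  b.filter (fun y => mw a b (y : ℕ) ≤ hw a b ((y : ℕ) + 1))

variable {n : ℕ}

lemma mw_succ (a b : Finset (Fin n)) (t : ℕ) :
    mw a b (t+1) = min (mw a b t) (hw a b (t+1)) := rfl

lemma mw_zero (a b : Finset (Fin n)) : mw a b 0 = hw a b 0 := rfl

lemma hw_step (a b : Finset (Fin n)) (t : ℕ) :
    hw a b t - 1 ≤ hw a b (t+1) ∧ hw a b (t+1) ≤ hw a b t + 1 := by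
  have ha := Pc_step a t
  have hb := Pc_step b t
  unfold hw
  omega

lemma mw_le (a b : Finset (Fin n)) (t : ℕ) : mw a b t ≤ hw a b t := rmin_le _ _

lemma rec_source (a b : Finset (Fin n)) (r : ℕ) (hr : hw a b (r+1) < mw a b r) :
    ∃ y : Fin n, y ∈ b ∧ y ∉ a ∧ (y : ℕ) = r ∧ hw a b ((y:ℕ)+1) < mw a b (y:ℕ) := by
  have h1 : mw a b r ≤ hw a b r := mw_le a b r
  have hne : ¬ (∀ y ∈ b, (y:ℕ) ≠ r) := by
    intro h
    have hb := Pc_succ_not h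
    have ha := Pc_step a r
    unfold hw at hr h1
    omega
  push_neg at hne
  obtain ⟨y, hyb, hyr⟩ := hne
  refine ⟨y, hyb, ?_, hyr, ?_⟩
  · intro hya
    have h2 := Pc_succ_mem hya
    have h3 := Pc_step b r
    rw [hyr] at h2
    unfold hw at hr h1
    omega
  · rw [hyr]; exact hr

lemma hw_insert (a b : Finset (Fin n)) {x : Fin n} (hx : x ∉ a) (t : ℕ) :
    hw (insert x a) b t = hw a b t + (if (x:ℕ) < t then 1 else 0) := by
  unfold hw
  rw [Pc_insert hx]
  ring

lemma mw_insert_eq (a b : Finset (Fin n)) (x : Fin n) (hx : x ∉ a) :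
    ∀ t, (∀ r, (x:ℕ) ≤ r → r < t → mw a b r ≤ hw a b (r+1)) →
    mw (insert x a) b t = mw a b t := by
  intro t
  induction t with
  | zero =>
    intro _
    rw [mw_zero, mw_zero, hw_insert a b hx 0]
    simp
  | succ t ih =>
    intro hc
    have ihe := ih (fun r h1 h2 => hc r h1 (by omega))
    rw [mw_succ, mw_succ, ihe, hw_insert a b hx (t+1)]
    by_cases hxt : (x:ℕ) < t + 1
    · have hcr := hc t (by omega) (by omega)
      rw [if_pos hxt]
      omega
    · rw [if_neg hxt]
      simp

lemma mw_insert_shift (a b : Finset (Fin n)) (x : Fin n) (hx : x ∉ a) (Y : ℕ)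
    (hXY : (x:ℕ) ≤ Y)
    (hbelow : ∀ r, (x:ℕ) ≤ r → r < Y → mw a b r ≤ hw a b (r+1))
    (hrec : hw a b (Y+1) < mw a b Y) :
    ∀ t, Y < t → mw (insert x a) b t = mw a b t + 1 := by
  intro t
  induction t with
  | zero => intro h; exact absurd h (by omega)
  | succ t ih =>
    intro hYt
    by_cases hty : t = Y
    · subst hty
      have hmY : mw (insert x a) b t = mw a b t := mw_insert_eq a b x hx t hbelow
      have hs := hw_step a b t
      have hle := mw_le a b t
      rw [mw_succ, mw_succ, hmY, hw_insert a b hx (t+1), if_pos (by omega)]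
      omega
    · have ht : Y < t := by omega
      have ihe := ih ht
      rw [mw_succ, mw_succ, ihe, hw_insert a b hx (t+1), if_pos (by omega)]
      omega

lemma matchStep_inv (b : Finset (Fin n)) (x : Fin n) (st : Finset (Fin n) × Finset (Fin n))
    (h1 : st.1 = b \ st.2) (h2 : st.2 ⊆ b) :
    (matchStep x st).1 = b \ (matchStep x st).2 ∧ (matchStep x st).2 ⊆ b := by
  have hmdef : matchStep x st = if h : (st.1.filter (fun y => x ≤ y)).Nonempty then
      (st.1.erase ((st.1.filter (fun y => x ≤ y)).min' h),
        insert ((st.1.filter (fun y => x ≤ y)).min' h) st.2) else st := rfl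
  by_cases hc : (st.1.filter (fun y => x ≤ y)).Nonempty
  · rw [hmdef, dif_pos hc]
    have hy₀mem : (st.1.filter (fun y => x ≤ y)).min' hc ∈ st.1.filter (fun y => x ≤ y) :=
      Finset.min'_mem _ _
    set y₀ := (st.1.filter (fun y => x ≤ y)).min' hc
    have hy₀1 : y₀ ∈ st.1 := Finset.mem_of_mem_filter _ hy₀mem
    rw [h1, Finset.mem_sdiff] at hy₀1
    constructor
    · rw [h1]
      ext z
      simp only [Finset.mem_erase, Finset.mem_sdiff, Finset.mem_insert]
      tauto
    · exact Finset.insert_subset_iff.mpr ⟨hy₀1.1, h2⟩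
  · rw [hmdef, dif_neg hc]
    exact ⟨h1, h2⟩

lemma fold_inv (b : Finset (Fin n)) (l : List (Fin n)) :
    ∀ st : Finset (Fin n) × Finset (Fin n), st.1 = b \ st.2 → st.2 ⊆ b →
    (l.foldl (fun st x => matchStep x st) st).1
        = b \ (l.foldl (fun st x => matchStep x st) st).2
    ∧ (l.foldl (fun st x => matchStep x st) st).2 ⊆ b := by
  induction l with
  | nil => intro st h1 h2; exact ⟨h1, h2⟩
  | cons x l ih =>
    intro st h1 h2
    simp only [List.foldl_cons]
    have h := matchStep_inv b x st h1 h2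
    exact ih _ h.1 h.2

lemma sort_insert_max {s : Finset (Fin n)} {x : Fin n} (hlt : ∀ z ∈ s, z < x) :
    (insert x s).sort (· ≤ ·) = s.sort (· ≤ ·) ++ [x] := by
  have hx : x ∉ s := fun h => absurd (hlt x h) (lt_irrefl x)
  have hperm : ((insert x s).sort (· ≤ ·)).Perm (s.sort (· ≤ ·) ++ [x]) :=
    ((Finset.sort_perm_toList _ _).trans (Finset.toList_insert hx)).trans
      (((Finset.sort_perm_toList s (· ≤ ·)).symm.cons x).trans
        (List.perm_append_singleton _ _).symm)
  have hs1 : List.Pairwise (· ≤ ·) ((insert x s).sort (· ≤ ·)) := Finset.pairwise_sort _ _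
  have hs2 : List.Pairwise (· ≤ ·) (s.sort (· ≤ ·) ++ [x]) := by
    refine List.pairwise_append.mpr ⟨Finset.pairwise_sort _ _, List.pairwise_singleton _ x, ?_⟩
    intro z hz y hy
    rw [List.mem_singleton] at hy
    subst hy
    exact le_of_lt (hlt z ((Finset.mem_sort _).mp hz))
  exact List.Perm.eq_of_pairwise' hs1 hs2 hperm

theorem colMatch_eq (a b : Finset (Fin n)) : colMatch a b = matchedSet a b := by
  induction a using Finset.induction_on_max with
  | empty =>
    have h1 : colMatch (∅ : Finset (Fin n)) b = ∅ := by simp [colMatch]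
    rw [h1]
    symm
    apply Finset.filter_eq_empty_iff.mpr
    intro y hyb
    have hPe : ∀ t, Pc (∅ : Finset (Fin n)) t = 0 := by intro t; simp [Pc]
    have h2 : ∀ t, hw (∅ : Finset (Fin n)) b (t+1) ≤ hw ∅ b t := by
      intro t
      have := Pc_step b t
      unfold hw
      rw [hPe, hPe]
      omega
    have h3 : mw (∅ : Finset (Fin n)) b (y:ℕ) = hw ∅ b (y:ℕ) := rmin_of_antitone h2 _
    have h4 := Pc_succ_mem hyb
    unfold hw at h3 ⊢
    simp only [hPe] at h3 ⊢
    omega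
  | insert x s hlt ih =>
    have hx : x ∉ s := fun h => absurd (hlt x h) (lt_irrefl x)
    have hfold0 := fold_inv b (s.sort (· ≤ ·)) (b, ∅) (by simp) (by simp)
    set st := (s.sort (· ≤ ·)).foldl (fun st x => matchStep x st) (b, (∅ : Finset (Fin n)))
      with hst
    have hst2 : st.2 = colMatch s b := rfl
    have hst1 : st.1 = b \ matchedSet s b := by rw [hfold0.1, hst2, ih]
    have hfold : colMatch (insert x s) b = (matchStep x st).2 := by
      unfold colMatch
      rw [sort_insert_max hlt, List.foldl_append]
      simp only [List.foldl_cons, List.foldl_nil]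
      rfl
    rw [hfold]
    have hmdef : matchStep x st = if h : (st.1.filter (fun y => x ≤ y)).Nonempty then
        (st.1.erase ((st.1.filter (fun y => x ≤ y)).min' h),
          insert ((st.1.filter (fun y => x ≤ y)).min' h) st.2) else st := rfl
    by_cases hc : (st.1.filter (fun y => x ≤ y)).Nonempty
    · -- the new letter gets matched to y₀, the smallest unmatched letter ≥ x
      rw [hmdef, dif_pos hc]
      have hy₀mem : (st.1.filter (fun y => x ≤ y)).min' hc ∈ st.1.filter (fun y => x ≤ y) :=
        Finset.min'_mem _ _
      set y₀ := (st.1.filter (fun y => x ≤ y)).min' hc with hy₀def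
      rw [Finset.mem_filter, hst1, Finset.mem_sdiff] at hy₀mem
      obtain ⟨⟨hy₀b, hy₀M⟩, hxy₀⟩ := hy₀mem
      have hy₀un : hw s b ((y₀:ℕ)+1) < mw s b (y₀:ℕ) := by
        by_contra hcon
        push_neg at hcon
        exact hy₀M (Finset.mem_filter.mpr ⟨hy₀b, hcon⟩)
      have hXY : (x:ℕ) ≤ (y₀:ℕ) := hxy₀
      have hbelow : ∀ r, (x:ℕ) ≤ r → r < (y₀:ℕ) → mw s b r ≤ hw s b (r+1) := by
        intro r h1 h2
        by_contra hcon
        push_neg at hcon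
        obtain ⟨y₁, hy₁b, hy₁s, hy₁r, hy₁un⟩ := rec_source s b r hcon
        have hy₁M : y₁ ∉ matchedSet s b := by
          intro hmem
          obtain ⟨_, hcc⟩ := Finset.mem_filter.mp hmem
          omega
        have hy₁c : y₁ ∈ st.1.filter (fun y => x ≤ y) := by
          rw [Finset.mem_filter, hst1, Finset.mem_sdiff]
          refine ⟨⟨hy₁b, hy₁M⟩, ?_⟩
          show (x:ℕ) ≤ (y₁:ℕ)
          omega
        have hm := Finset.min'_le _ _ hy₁c
        rw [← hy₀def] at hm
        have : (y₀:ℕ) ≤ (y₁:ℕ) := hm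
        omega
      have hflat : ∀ t ≤ (y₀:ℕ), mw (insert x s) b t = mw s b t := by
        intro t ht
        exact mw_insert_eq s b x hx t (fun r h1 h2 => hbelow r h1 (by omega))
      have hshift := mw_insert_shift s b x hx (y₀:ℕ) hXY hbelow hy₀un
      show insert y₀ st.2 = matchedSet (insert x s) b
      rw [hst2, ih]
      ext y
      by_cases hyb : y ∈ b
      · simp only [Finset.mem_insert, matchedSet, Finset.mem_filter]
        rcases lt_trichotomy ((y:ℕ)) ((y₀:ℕ)) with hlt' | heq | hgt
        · have hne : y ≠ y₀ := by
            intro h; rw [h] at hlt'; omega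
          by_cases hxle : (x:ℕ) ≤ (y:ℕ)
          · have h1 := hbelow (y:ℕ) hxle hlt'
            have h2 := hflat (y:ℕ) (by omega)
            have h3 := hw_insert s b hx ((y:ℕ)+1)
            rw [if_pos (by omega)] at h3
            constructor
            · intro _
              exact ⟨hyb, by omega⟩
            · intro _
              exact Or.inr ⟨hyb, h1⟩
          · have h2 := hflat (y:ℕ) (by omega)
            have h3 := hw_insert s b hx ((y:ℕ)+1)
            rw [if_neg (by omega)] at h3
            constructor
            · rintro (h | hyM)
              · exact absurd h hne
              · obtain ⟨_, hcnd⟩ := hyM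
                exact ⟨hyb, by omega⟩
            · rintro ⟨_, hcnd⟩
              exact Or.inr ⟨hyb, by omega⟩
        · have hyy : y = y₀ := Fin.ext heq
          have h2 := hflat (y₀:ℕ) (le_refl _)
          have h3 := hw_insert s b hx ((y₀:ℕ)+1)
          rw [if_pos (by omega)] at h3
          have h4 := (hw_step s b (y₀:ℕ)).1
          have h5 := mw_le s b (y₀:ℕ)
          rw [heq]
          constructor
          · intro _
            exact ⟨hyb, by omega⟩
          · intro _
            exact Or.inl hyy
        · have hne : y ≠ y₀ := by
            intro h; rw [h] at hgt; omega
          have h2 := hshift (y:ℕ) hgt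
          have h3 := hw_insert s b hx ((y:ℕ)+1)
          rw [if_pos (by omega)] at h3
          constructor
          · rintro (h | hyM)
            · exact absurd h hne
            · obtain ⟨_, hcnd⟩ := hyM
              exact ⟨hyb, by omega⟩
          · rintro ⟨_, hcnd⟩
            exact Or.inr ⟨hyb, by omega⟩
      · simp only [Finset.mem_insert, matchedSet, Finset.mem_filter]
        constructor
        · rintro (h | ⟨h, _⟩)
          · rw [h] at hyb; exact absurd hy₀b hyb
          · exact absurd h hyb
        · rintro ⟨h, _⟩
          exact absurd h hyb
    · -- no unmatched letter ≥ x : the new letter is not matched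
      rw [hmdef, dif_neg hc]
      have hNR : ∀ r, (x:ℕ) ≤ r → mw s b r ≤ hw s b (r+1) := by
        intro r hxr
        by_contra hcon
        push_neg at hcon
        obtain ⟨y₁, hy₁b, hy₁s, hy₁r, hy₁un⟩ := rec_source s b r hcon
        apply hc
        have hy₁M : y₁ ∉ matchedSet s b := by
          intro hmem
          obtain ⟨_, hcc⟩ := Finset.mem_filter.mp hmem
          omega
        refine ⟨y₁, ?_⟩
        rw [Finset.mem_filter, hst1, Finset.mem_sdiff]
        refine ⟨⟨hy₁b, hy₁M⟩, ?_⟩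
        show (x:ℕ) ≤ (y₁:ℕ)
        omega
      have hflat : ∀ t, mw (insert x s) b t = mw s b t :=
        fun t => mw_insert_eq s b x hx t (fun r h1 _ => hNR r h1)
      show st.2 = matchedSet (insert x s) b
      rw [hst2, ih]
      ext y
      simp only [matchedSet, Finset.mem_filter]
      have h2 := hflat (y:ℕ)
      have h3 := hw_insert s b hx ((y:ℕ)+1)
      constructor
      · rintro ⟨hyb, hcnd⟩
        refine ⟨hyb, ?_⟩
        by_cases hxle : (x:ℕ) < (y:ℕ)+1
        · rw [if_pos hxle] at h3; omega
        · rw [if_neg hxle] at h3; omega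
      · rintro ⟨hyb, hcnd⟩
        refine ⟨hyb, ?_⟩
        by_cases hxle : (x:ℕ) ≤ (y:ℕ)
        · have := hNR (y:ℕ) hxle
          rw [if_pos (by omega)] at h3
          omega
        · rw [if_neg (by omega)] at h3
          omega

section Part4
variable {n : ℕ}

lemma mw_def (a b : Finset (Fin n)) : mw a b = rmin (hw a b) := rfl

lemma matchedSet_subset (a b : Finset (Fin n)) : matchedSet a b ⊆ b := Finset.filter_subset _ _

lemma Pc_matchedSet (a b : Finset (Fin n)) : ∀ t, Pc (matchedSet a b) t = Pc b t + mw a b t := by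
  intro t
  induction t with
  | zero =>
    rw [Pc_zero, Pc_zero, mw_zero]
    unfold hw
    rw [Pc_zero, Pc_zero]
    ring
  | succ t ih =>
    rw [Pc_succ (matchedSet a b), Pc_succ b, mw_succ]
    by_cases hB : ∃ y ∈ b, (y:ℕ) = t
    · obtain ⟨y, hyb, hyt⟩ := hB
      have hcb : b.filter (fun z : Fin n => (z:ℕ) = t) = {y} := by
        rw [← hyt]; exact filter_val_eq_of_mem hyb
      by_cases hyM : y ∈ matchedSet a b
      · have hcM : (matchedSet a b).filter (fun z : Fin n => (z:ℕ) = t) = {y} := by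
          rw [← hyt]; exact filter_val_eq_of_mem hyM
        have hcond : mw a b t ≤ hw a b (t+1) := by
          obtain ⟨_, hcc⟩ := Finset.mem_filter.mp hyM
          rw [← hyt]; exact hcc
        rw [hcb, hcM]
        simp only [Finset.card_singleton]
        push_cast
        omega
      · have hcM : (matchedSet a b).filter (fun z : Fin n => (z:ℕ) = t) = ∅ := by
          apply filter_val_eq_of_not
          intro z hz hzt
          have hzy : z = y := Fin.ext (by omega)
          exact hyM (hzy ▸ hz)
        have hcond : hw a b (t+1) < mw a b t := by
          have h1 : ¬ (mw a b (y:ℕ) ≤ hw a b ((y:ℕ)+1)) := fun hcc =>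
            hyM (Finset.mem_filter.mpr ⟨hyb, hcc⟩)
          rw [hyt] at h1
          omega
        have hs := (hw_step a b t).1
        have hle := mw_le a b t
        rw [hcb, hcM]
        simp only [Finset.card_singleton, Finset.card_empty]
        push_cast
        omega
    · push_neg at hB
      have hcb : b.filter (fun z : Fin n => (z:ℕ) = t) = ∅ := filter_val_eq_of_not hB
      have hcM : (matchedSet a b).filter (fun z : Fin n => (z:ℕ) = t) = ∅ :=
        filter_val_eq_of_not (fun z hz => hB z (matchedSet_subset a b hz))
      have hbstep : Pc b (t+1) = Pc b t := Pc_succ_not hB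
      have hastep := Pc_step a t
      have hle := mw_le a b t
      have hup : hw a b t ≤ hw a b (t+1) := by
        unfold hw; omega
      have hle2 : mw a b t ≤ hw a b (t+1) := le_trans hle hup
      rw [hcb, hcM]
      simp only [Finset.card_empty]
      push_cast
      omega

lemma inter_subset_matched (a b : Finset (Fin n)) :
    ∀ y, y ∈ a → y ∈ b → y ∈ matchedSet a b := by
  intro y hya hyb
  refine Finset.mem_filter.mpr ⟨hyb, ?_⟩
  have h1 := Pc_succ_mem hya
  have h2 := Pc_succ_mem hyb
  have h3 := mw_le a b (y:ℕ)
  unfold hw at h3 ⊢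
  omega

lemma Pc_wedge (a b : Finset (Fin n)) (t : ℕ) : Pc (wedge a b) t = Pc b t + mw a b t := by
  unfold wedge
  rw [colMatch_eq]
  exact Pc_matchedSet a b t

lemma Pc_vee (a b : Finset (Fin n)) (t : ℕ) : Pc (vee a b) t = Pc a t - mw a b t := by
  have hdisj : Disjoint a (b \ colMatch a b) := by
    rw [Finset.disjoint_left]
    intro z hza hzmem
    rw [colMatch_eq] at hzmem
    obtain ⟨hzb, hzM⟩ := Finset.mem_sdiff.mp hzmem
    exact hzM (inter_subset_matched a b z hza hzb)
  have hsub : colMatch a b ⊆ b := by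
    rw [colMatch_eq]; exact matchedSet_subset a b
  unfold vee
  rw [Pc_union_disj hdisj, Pc_sdiff hsub]
  have h := Pc_matchedSet a b t
  rw [colMatch_eq]
  omega


/-- For all columns `a, b, c` over `A`: `(a ∨ b) ∨ ((a ∧ b) ∨ c) = a ∨ (b ∨ c)`. -/
theorem vee_braid (n : ℕ) (hn : 1 ≤ n) (a b c : Finset (Fin n)) :
    vee (vee a b) (vee (wedge a b) c) = vee a (vee b c) := by
  apply Pc_inj
  intro t
  have hD0 : hw a b 0 = 0 := by unfold hw; rw [Pc_zero, Pc_zero]; ring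
  have hE0 : hw b c 0 = 0 := by unfold hw; rw [Pc_zero, Pc_zero]; ring
  have key := walk_identity (hw a b) (hw b c) hD0 hE0 (hw_step a b) (hw_step b c) t
  have e1 : ∀ s, hw (wedge a b) c s = hw b c s + rmin (hw a b) s := by
    intro s
    rw [show hw (wedge a b) c s = Pc (wedge a b) s - Pc c s from rfl,
      show hw b c s = Pc b s - Pc c s from rfl, Pc_wedge, mw_def]
    ring
  have e3 : ∀ s, hw (vee a b) (vee (wedge a b) c) s
      = hw a b s - 2 * rmin (hw a b) s + rmin (fun r => hw b c r + rmin (hw a b) r) s := by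
    intro s
    have h1 : Pc (vee a b) s = Pc a s - rmin (hw a b) s := by rw [Pc_vee, mw_def]
    have h2 : Pc (vee (wedge a b) c) s
        = Pc b s + rmin (hw a b) s - rmin (fun r => hw b c r + rmin (hw a b) r) s := by
      rw [Pc_vee, Pc_wedge, mw_def, mw_def, rmin_congr e1]
    rw [show hw (vee a b) (vee (wedge a b) c) s
        = Pc (vee a b) s - Pc (vee (wedge a b) c) s from rfl,
      show hw a b s = Pc a s - Pc b s from rfl, h1, h2]
    ring
  have e4 : ∀ s, hw a (vee b c) s = hw a b s + rmin (hw b c) s := by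
    intro s
    rw [show hw a (vee b c) s = Pc a s - Pc (vee b c) s from rfl,
      show hw a b s = Pc a s - Pc b s from rfl, Pc_vee, mw_def]
    ring
  have L : Pc (vee (vee a b) (vee (wedge a b) c)) t
      = Pc a t - rmin (hw a b) t
        - rmin (fun s => hw a b s - 2 * rmin (hw a b) s
            + rmin (fun r => hw b c r + rmin (hw a b) r) s) t := by
    rw [Pc_vee, Pc_vee, mw_def, mw_def, rmin_congr e3]
  have R : Pc (vee a (vee b c)) t = Pc a t - rmin (fun s => hw a b s + rmin (hw b c) s) t := by
    rw [Pc_vee, mw_def, rmin_congr e4]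
  rw [L, R]
  omega
end Part4
end

section
/- For all columns a, b, c over A: (a ∧ (b ∨ c)) ∧ (b ∧ c) = (a ∧ b) ∧ c. -/
namespace Braid

def cnt {n : ℕ} (S : Finset (Fin n)) (v : ℕ) : ℤ :=
  ((S.filter (fun y : Fin n => (y : ℕ) < v)).card : ℤ)

def mmin (f : ℕ → ℤ) (v : ℕ) : ℤ :=
  (Finset.range (v+1)).inf' ⟨0, by simp⟩ f

lemma mmin_le {f : ℕ → ℤ} {s v : ℕ} (h : s ≤ v) : mmin f v ≤ f s :=
  Finset.inf'_le f (Finset.mem_range.2 (Nat.lt_succ_of_le h))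

lemma le_mmin {f : ℕ → ℤ} {v : ℕ} {c : ℤ} (h : ∀ s ≤ v, c ≤ f s) : c ≤ mmin f v :=
  Finset.le_inf' _ _ (fun s hs => h s (Nat.lt_succ_iff.1 (Finset.mem_range.1 hs)))

lemma mmin_exists (f : ℕ → ℤ) (v : ℕ) : ∃ s ≤ v, mmin f v = f s := by
  obtain ⟨s, hs, h⟩ := Finset.exists_mem_eq_inf' (⟨0, by simp⟩ : (Finset.range (v+1)).Nonempty) f
  exact ⟨s, Nat.lt_succ_iff.1 (Finset.mem_range.1 hs), h⟩

lemma mmin_anti {f : ℕ → ℤ} {s v : ℕ} (h : s ≤ v) : mmin f v ≤ mmin f s := by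
  obtain ⟨r, hr, he⟩ := mmin_exists f s
  rw [he]; exact mmin_le (hr.trans h)

lemma mmin_add_const (f : ℕ → ℤ) (c : ℤ) (v : ℕ) :
    mmin (fun s => f s + c) v = mmin f v + c := by
  apply le_antisymm
  · obtain ⟨r, hr, he⟩ := mmin_exists f v
    rw [he]; exact mmin_le hr
  · apply le_mmin; intro s hs
    have := mmin_le (f := f) hs; omega

lemma mmin_congr {f g : ℕ → ℤ} {v : ℕ} (h : ∀ s ≤ v, f s = g s) :
    mmin f v = mmin g v := by
  unfold mmin
  apply Finset.inf'_congr _ rfl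
  intro s hs
  exact h s (Nat.lt_succ_iff.1 (Finset.mem_range.1 hs))

lemma cnt_nonneg {n : ℕ} (S : Finset (Fin n)) (v : ℕ) : 0 ≤ cnt S v := by
  simp [cnt]

lemma cnt_zero {n : ℕ} (S : Finset (Fin n)) : cnt S 0 = 0 := by
  simp [cnt]

lemma cnt_mono {n : ℕ} (S : Finset (Fin n)) {s v : ℕ} (h : s ≤ v) : cnt S s ≤ cnt S v := by
  unfold cnt
  have : S.filter (fun y : Fin n => (y : ℕ) < s) ⊆ S.filter (fun y : Fin n => (y : ℕ) < v) := by
    intro y hy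
    rw [Finset.mem_filter] at hy ⊢
    exact ⟨hy.1, by omega⟩
  exact_mod_cast Finset.card_le_card this

lemma cnt_subset {n : ℕ} {S T : Finset (Fin n)} (h : S ⊆ T) (v : ℕ) : cnt S v ≤ cnt T v := by
  unfold cnt
  exact_mod_cast Finset.card_le_card (Finset.filter_subset_filter _ h)

lemma cnt_insert {n : ℕ} {S : Finset (Fin n)} {y : Fin n} (hy : y ∉ S) (v : ℕ) :
    cnt (insert y S) v = cnt S v + (if (y : ℕ) < v then 1 else 0) := by
  unfold cnt
  rw [Finset.filter_insert]
  split
  · rw [Finset.card_insert_of_notMem (by simp [hy])]; push_cast; ring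
  · simp

lemma cnt_sdiff {n : ℕ} {S T : Finset (Fin n)} (h : T ⊆ S) (v : ℕ) :
    cnt (S \ T) v = cnt S v - cnt T v := by
  unfold cnt
  have heq : (S \ T).filter (fun y : Fin n => (y : ℕ) < v)
      = S.filter (fun y : Fin n => (y : ℕ) < v) \ T.filter (fun y : Fin n => (y : ℕ) < v) := by
    ext y
    simp only [Finset.mem_filter, Finset.mem_sdiff]
    tauto
  rw [heq, Finset.card_sdiff_of_subset (Finset.filter_subset_filter _ h)]
  have := Finset.card_le_card (Finset.filter_subset_filter (fun y : Fin n => (y:ℕ) < v) h)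
  omega

/-- decomposition of a prefix-count difference as interval count -/
lemma cnt_diff_eq {n : ℕ} (S : Finset (Fin n)) {s v : ℕ} (h : s ≤ v) :
    cnt S v - cnt S s = ((S.filter (fun y : Fin n => s ≤ (y : ℕ) ∧ (y : ℕ) < v)).card : ℤ) := by
  unfold cnt
  have hd : S.filter (fun y : Fin n => (y : ℕ) < v)
      = S.filter (fun y : Fin n => (y : ℕ) < s) ∪ S.filter (fun y : Fin n => s ≤ (y : ℕ) ∧ (y : ℕ) < v) := by
    ext y
    simp only [Finset.mem_union, Finset.mem_filter]
    constructor
    · rintro ⟨hy, hv⟩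
      by_cases hc : (y : ℕ) < s
      · exact Or.inl ⟨hy, hc⟩
      · exact Or.inr ⟨hy, by omega, hv⟩
    · rintro (⟨hy, hv⟩ | ⟨hy, _, hv⟩) <;> exact ⟨hy, by omega⟩
  have hdisj : Disjoint (S.filter (fun y : Fin n => (y : ℕ) < s))
      (S.filter (fun y : Fin n => s ≤ (y : ℕ) ∧ (y : ℕ) < v)) := by
    apply Finset.disjoint_filter_filter'
    rw [disjoint_iff_inf_le]
    intro y hy
    simp only [Pi.inf_apply, inf_Prop_eq] at hy
    omega
  rw [hd, Finset.card_union_of_disjoint hdisj]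
  push_cast; ring

lemma cnt_interval_le {n : ℕ} {M b : Finset (Fin n)} (h : M ⊆ b) {s v : ℕ} (hsv : s ≤ v) :
    cnt M v - cnt M s ≤ cnt b v - cnt b s := by
  rw [cnt_diff_eq M hsv, cnt_diff_eq b hsv]
  exact_mod_cast Finset.card_le_card (Finset.filter_subset_filter _ h)

lemma cnt_interval_lt {n : ℕ} {M b : Finset (Fin n)} (h : M ⊆ b) {y0 : Fin n}
    (hy0b : y0 ∈ b) (hy0M : y0 ∉ M) {s v : ℕ} (hs : s ≤ (y0 : ℕ)) (hv : (y0 : ℕ) < v) :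
    cnt M v - cnt M s + 1 ≤ cnt b v - cnt b s := by
  have hsv : s ≤ v := by omega
  rw [cnt_diff_eq M hsv, cnt_diff_eq b hsv]
  have hins : insert y0 (M.filter (fun y : Fin n => s ≤ (y : ℕ) ∧ (y : ℕ) < v))
      ⊆ b.filter (fun y : Fin n => s ≤ (y : ℕ) ∧ (y : ℕ) < v) := by
    intro y hy
    rcases Finset.mem_insert.1 hy with rfl | hy
    · exact Finset.mem_filter.2 ⟨hy0b, hs, hv⟩
    · exact Finset.filter_subset_filter _ h hy
  have := Finset.card_le_card hins
  rw [Finset.card_insert_of_notMem (by simp [hy0M])] at this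
  omega

lemma cnt_succ_le {n : ℕ} (S : Finset (Fin n)) (v : ℕ) : cnt S (v+1) ≤ cnt S v + 1 := by
  have h := cnt_diff_eq S (show v ≤ v + 1 by omega)
  have hle : (S.filter (fun y : Fin n => v ≤ (y : ℕ) ∧ (y : ℕ) < v + 1)).card ≤ 1 := by
    apply Finset.card_le_one.2
    intro y hy z hz
    simp only [Finset.mem_filter] at hy hz
    apply Fin.ext; omega
  omega


def cntL {n : ℕ} (l : List (Fin n)) (v : ℕ) : ℤ :=
  ((l.countP (fun y : Fin n => decide ((y : ℕ) < v))) : ℤ)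

lemma cntL_nil {n : ℕ} (v : ℕ) : cntL ([] : List (Fin n)) v = 0 := by simp [cntL]

lemma cntL_append {n : ℕ} (l : List (Fin n)) (x : Fin n) (v : ℕ) :
    cntL (l ++ [x]) v = cntL l v + (if (x : ℕ) < v then 1 else 0) := by
  unfold cntL
  rw [List.countP_append]
  simp only [List.countP_cons, List.countP_nil]
  split <;> rename_i hx
  · rw [if_pos (by simpa using hx)]; push_cast; ring
  · rw [if_neg (by simpa using hx)]; push_cast; ring

/-- The key "saturation" helper: if every letter of `b` in `[x, v)` is already matched,
then adding the new letter `x` does not change the min-formula value at `v`. -/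
lemma helper_eq {n : ℕ} {l' : List (Fin n)} {b M' : Finset (Fin n)} {x : Fin n}
    (hM'b : M' ⊆ b)
    (hform : ∀ w, cnt M' w = mmin (fun s => cntL l' s + cnt b w - cnt b s) w)
    {v : ℕ} (hxv : (x : ℕ) ≤ v)
    (hsat : ∀ y ∈ b, (x : ℕ) ≤ (y : ℕ) → (y : ℕ) < v → y ∈ M') :
    mmin (fun s => cntL (l' ++ [x]) s + cnt b v - cnt b s) v = cnt M' v := by
  -- count equality on the interval [x, v)
  have hint : cnt b v - cnt b (x : ℕ) = cnt M' v - cnt M' (x : ℕ) := by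
    have h1 : cnt M' v - cnt M' (x : ℕ) ≤ cnt b v - cnt b (x : ℕ) :=
      cnt_interval_le hM'b hxv
    have h2 : cnt b v - cnt b (x : ℕ) ≤ cnt M' v - cnt M' (x : ℕ) := by
      rw [cnt_diff_eq b hxv, cnt_diff_eq M' hxv]
      have hss : b.filter (fun y : Fin n => (x:ℕ) ≤ (y : ℕ) ∧ (y : ℕ) < v)
          ⊆ M'.filter (fun y : Fin n => (x:ℕ) ≤ (y : ℕ) ∧ (y : ℕ) < v) := by
        intro y hy
        rw [Finset.mem_filter] at hy ⊢
        exact ⟨hsat y hy.1 hy.2.1 hy.2.2, hy.2⟩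
      exact_mod_cast Finset.card_le_card hss
    omega
  apply le_antisymm
  · -- pick s₀ attaining the formula at threshold x
    obtain ⟨s₀, hs₀, he₀⟩ := mmin_exists (fun s => cntL l' s + cnt b (x : ℕ) - cnt b s) (x : ℕ)
    have := hform (x : ℕ)
    calc mmin (fun s => cntL (l' ++ [x]) s + cnt b v - cnt b s) v
        ≤ cntL (l' ++ [x]) s₀ + cnt b v - cnt b s₀ := mmin_le (hs₀.trans hxv)
      _ = cntL l' s₀ + cnt b v - cnt b s₀ := by
          rw [cntL_append, if_neg (by omega)]; ring
      _ = cnt M' v := by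
          have : cnt M' (x:ℕ) = cntL l' s₀ + cnt b (x:ℕ) - cnt b s₀ := by rw [this, he₀]
          omega
  · apply le_mmin
    intro s hs
    have h1 : cnt M' v ≤ cntL l' s + cnt b v - cnt b s := by
      rw [hform v]; exact mmin_le hs
    have h2 : cntL l' s ≤ cntL (l' ++ [x]) s := by
      rw [cntL_append]; split <;> omega
    omega

lemma foldl_spec {n : ℕ} (l : List (Fin n)) (b : Finset (Fin n)) :
    (l.foldl (fun st x => matchStep x st) (b, ∅)).2 ⊆ b ∧
    (l.foldl (fun st x => matchStep x st) (b, ∅)).1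
      = b \ (l.foldl (fun st x => matchStep x st) (b, ∅)).2 ∧
    (∀ y ∈ l, y ∈ b → y ∈ (l.foldl (fun st x => matchStep x st) (b, ∅)).2) ∧
    (∀ v, cnt (l.foldl (fun st x => matchStep x st) (b, ∅)).2 v
      = mmin (fun s => cntL l s + cnt b v - cnt b s) v) := by
  induction l using List.reverseRecOn with
  | nil =>
    refine ⟨by simp, by simp, by simp, ?_⟩
    intro v
    simp only [List.foldl_nil]
    apply le_antisymm
    · have : cnt (∅ : Finset (Fin n)) v = 0 := by simp [cnt]
      rw [this]
      apply le_mmin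
      intro s hs
      have := cnt_mono b hs
      rw [cntL_nil]
      omega
    · calc mmin (fun s => cntL ([] : List (Fin n)) s + cnt b v - cnt b s) v
          ≤ cntL ([] : List (Fin n)) v + cnt b v - cnt b v := mmin_le le_rfl
        _ = 0 := by rw [cntL_nil]; ring
        _ = cnt (∅ : Finset (Fin n)) v := by simp [cnt]
  | append_singleton l' x ih =>
    obtain ⟨hM'b, hst1, hmem, hform⟩ := ih
    set res' := l'.foldl (fun st x => matchStep x st) (b, ∅) with hres'
    set M' := res'.2 with hM'
    have hfold : (l' ++ [x]).foldl (fun st x => matchStep x st) (b, ∅)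
        = matchStep x res' := by
      rw [List.foldl_append, List.foldl_cons, List.foldl_nil]
    have hres'eq : res' = (b \ M', M') := by
      rw [Prod.ext_iff]; exact ⟨hst1, rfl⟩
    rw [hfold, hres'eq]
    have hms : matchStep x (b \ M', M')
        = if h : ((b \ M').filter (fun y => x ≤ y)).Nonempty then
            ((b \ M').erase (((b \ M').filter (fun y => x ≤ y)).min' h),
              insert (((b \ M').filter (fun y => x ≤ y)).min' h) M')
          else (b \ M', M') := rfl
    by_cases h : ((b \ M').filter (fun y => x ≤ y)).Nonempty
    · rw [hms, dif_pos h]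
      set y0 := ((b \ M').filter (fun y => x ≤ y)).min' h with hy0
      have hy0mem : y0 ∈ (b \ M').filter (fun y => x ≤ y) := Finset.min'_mem _ h
      rw [Finset.mem_filter, Finset.mem_sdiff] at hy0mem
      obtain ⟨⟨hy0b, hy0M'⟩, hxy0⟩ := hy0mem
      have hxy0' : (x : ℕ) ≤ (y0 : ℕ) := hxy0
      have hy0min : ∀ y ∈ b, y ∉ M' → x ≤ y → y0 ≤ y := by
        intro y hyb hyM' hxy
        exact Finset.min'_le _ y (by rw [Finset.mem_filter, Finset.mem_sdiff]; exact ⟨⟨hyb, hyM'⟩, hxy⟩)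
      refine ⟨?_, ?_, ?_, ?_⟩
      · intro y hy
        rcases Finset.mem_insert.1 hy with rfl | hy
        · exact hy0b
        · exact hM'b hy
      · simp only
        ext z
        simp only [Finset.mem_erase, Finset.mem_sdiff, Finset.mem_insert]
        tauto
      · intro y hy hyb
        simp only [List.mem_append, List.mem_singleton] at hy
        rcases hy with hy | rfl
        · exact Finset.mem_insert_of_mem (hmem y hy hyb)
        · by_cases hxM' : y ∈ M'
          · exact Finset.mem_insert_of_mem hxM'
          · have := hy0min y hyb hxM' le_rfl
            have : y0 = y := le_antisymm this hxy0
            rw [← this]; exact Finset.mem_insert_self _ _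
      · intro v
        simp only
        rw [cnt_insert hy0M']
        by_cases hvx : v ≤ (x : ℕ)
        · -- trivial zone
          rw [if_neg (by omega), add_zero, hform v]
          apply mmin_congr
          intro s hs
          rw [cntL_append, if_neg (by omega)]
          ring
        · push_neg at hvx
          by_cases hvy0 : v ≤ (y0 : ℕ)
          · rw [if_neg (by omega)]
            have hsat2 : ∀ y ∈ b, (x : ℕ) ≤ (y : ℕ) → (y : ℕ) < v → y ∈ M' := by
              intro y hyb hxy hyv
              by_contra hyM'
              have := hy0min y hyb hyM' (by rwa [Fin.le_def])
              rw [Fin.le_def] at this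
              omega
            rw [helper_eq hM'b hform (by omega) hsat2, add_zero]
          · push_neg at hvy0
            rw [if_pos (by omega)]
            apply le_antisymm
            · apply le_mmin
              intro s hs
              show cnt M' v + 1 ≤ cntL (l' ++ [x]) s + cnt b v - cnt b s
              rw [cntL_append]
              by_cases hsx : (x : ℕ) < s
              · rw [if_pos hsx]
                have : cnt M' v ≤ cntL l' s + cnt b v - cnt b s := by
                  rw [hform v]; exact mmin_le hs
                omega
              · rw [if_neg hsx]
                push_neg at hsx
                have h1 : cnt M' s ≤ cntL l' s := by
                  have h0 := hform s
                  have h2 : mmin (fun r => cntL l' r + cnt b s - cnt b r) s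
                      ≤ cntL l' s + cnt b s - cnt b s := mmin_le (le_refl s)
                  rw [← h0] at h2
                  omega
                have h3 : cnt M' v - cnt M' s + 1 ≤ cnt b v - cnt b s :=
                  cnt_interval_lt hM'b hy0b hy0M' (by omega) (by omega)
                omega
            · obtain ⟨s₁, hs₁, he₁⟩ := mmin_exists (fun s => cntL l' s + cnt b v - cnt b s) v
              have hle : mmin (fun s => cntL (l' ++ [x]) s + cnt b v - cnt b s) v
                  ≤ cntL (l' ++ [x]) s₁ + cnt b v - cnt b s₁ := mmin_le hs₁
              rw [cntL_append] at hle
              rw [hform v, he₁]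
              split at hle <;> omega
    · rw [hms, dif_neg h]
      have hsat : ∀ y ∈ b, y ∉ M' → ¬ x ≤ y := by
        intro y hyb hyM' hxy
        exact h ⟨y, by rw [Finset.mem_filter, Finset.mem_sdiff]; exact ⟨⟨hyb, hyM'⟩, hxy⟩⟩
      refine ⟨hM'b, ?_, ?_, ?_⟩
      · rfl
      · intro y hy hyb
        simp only [List.mem_append, List.mem_singleton] at hy
        rcases hy with hy | rfl
        · exact hmem y hy hyb
        · by_contra hyM'
          exact hsat y hyb hyM' le_rfl
      · intro v
        simp only
        by_cases hvx : v ≤ (x : ℕ)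
        · rw [hform v]
          apply mmin_congr
          intro s hs
          rw [cntL_append, if_neg (by omega)]
          ring
        · push_neg at hvx
          have hsat2 : ∀ y ∈ b, (x : ℕ) ≤ (y : ℕ) → (y : ℕ) < v → y ∈ M' := by
            intro y hyb hxy _
            by_contra hyM'
            exact hsat y hyb hyM' (by rwa [Fin.le_def])
          rw [helper_eq hM'b hform (by omega) hsat2]


lemma star (E F : ℕ → ℤ) (hF : ∀ t, F t ≤ F (t+1) + 1) (v : ℕ) :
    mmin (fun t => mmin (fun s => E s + mmin F s) t + F t - 2 * mmin F t) v + mmin F v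
    = mmin (fun t => mmin E t + F t) v := by
  apply le_antisymm
  · -- LHS ≤ RHS
    obtain ⟨t0, ht0, he⟩ := mmin_exists (fun t => mmin E t + F t) v
    obtain ⟨s0, hs0, he2⟩ := mmin_exists E t0
    have he' : mmin (fun t => mmin E t + F t) v = mmin E t0 + F t0 := he
    rw [he', he2]
    have hDv : mmin F v ≤ mmin F t0 := mmin_anti ht0
    have hDPt0 : mmin F t0 ≤ F t0 := mmin_le le_rfl
    by_cases hc : mmin F s0 ≤ mmin F t0
    · have h1 : mmin (fun t => mmin (fun s => E s + mmin F s) t + F t - 2 * mmin F t) v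
          ≤ mmin (fun s => E s + mmin F s) t0 + F t0 - 2 * mmin F t0 := mmin_le ht0
      have h2 : mmin (fun s => E s + mmin F s) t0 ≤ E s0 + mmin F s0 := mmin_le hs0
      omega
    · push_neg at hc
      obtain ⟨r, hr, hre⟩ := mmin_exists F t0
      have hre' : mmin F t0 = F r := hre
      have hrs0 : s0 < r := by
        by_contra hcon
        push_neg at hcon
        have : mmin F s0 ≤ F r := mmin_le hcon
        omega
      set P := (Finset.range (t0+1)).filter (fun u => s0 < u ∧ F u < mmin F s0) with hP
      have hPne : P.Nonempty := by
        refine ⟨r, ?_⟩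
        rw [hP, Finset.mem_filter, Finset.mem_range]
        exact ⟨by omega, hrs0, by omega⟩
      set u0 := P.min' hPne with hu0
      have hu0mem : u0 ∈ P := Finset.min'_mem _ _
      rw [hP, Finset.mem_filter, Finset.mem_range] at hu0mem
      obtain ⟨hu0t0, hs0u0, hFu0⟩ := hu0mem
      have hwlow : ∀ w ≤ u0 - 1, mmin F s0 ≤ F w := by
        intro w hw
        by_cases hws : w ≤ s0
        · exact mmin_le hws
        · push_neg at hws
          by_contra hcon
          push_neg at hcon
          have hwP : w ∈ P := by
            rw [hP, Finset.mem_filter, Finset.mem_range]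
            exact ⟨by omega, hws, hcon⟩
          have := Finset.min'_le _ _ hwP
          omega
      have ht'1 : mmin F (u0 - 1) = mmin F s0 := by
        apply le_antisymm
        · exact mmin_anti (by omega)
        · exact le_mmin hwlow
      have hFt' : F (u0 - 1) = mmin F s0 := by
        have h1 : mmin F s0 ≤ F (u0 - 1) := hwlow _ le_rfl
        have h2 : F (u0 - 1) ≤ F (u0 - 1 + 1) + 1 := hF _
        have h3 : u0 - 1 + 1 = u0 := by omega
        rw [h3] at h2
        omega
      have hle1 : mmin (fun t => mmin (fun s => E s + mmin F s) t + F t - 2 * mmin F t) v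
          ≤ mmin (fun s => E s + mmin F s) (u0 - 1) + F (u0 - 1) - 2 * mmin F (u0 - 1) :=
        mmin_le (by omega)
      have hle2 : mmin (fun s => E s + mmin F s) (u0 - 1) ≤ E s0 + mmin F s0 :=
        mmin_le (by omega)
      omega
  · -- RHS ≤ LHS
    obtain ⟨t0, ht0, he⟩ := mmin_exists
      (fun t => mmin (fun s => E s + mmin F s) t + F t - 2 * mmin F t) v
    have he' : mmin (fun t => mmin (fun s => E s + mmin F s) t + F t - 2 * mmin F t) v
        = mmin (fun s => E s + mmin F s) t0 + F t0 - 2 * mmin F t0 := he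
    obtain ⟨s0, hs0, he2⟩ := mmin_exists (fun s => E s + mmin F s) t0
    have he2' : mmin (fun s => E s + mmin F s) t0 = E s0 + mmin F s0 := he2
    rw [he', he2']
    have hDs0t0 : mmin F t0 ≤ mmin F s0 := mmin_anti hs0
    have hFt0 : mmin F t0 ≤ F t0 := mmin_le le_rfl
    by_cases hc : mmin F t0 ≤ mmin F v
    · have h1 : mmin (fun t => mmin E t + F t) v ≤ mmin E t0 + F t0 := mmin_le ht0
      have h2 : mmin E t0 ≤ E s0 := mmin_le hs0
      omega
    · push_neg at hc
      obtain ⟨r, hr, hre⟩ := mmin_exists F v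
      have hre' : mmin F v = F r := hre
      have hrt0 : t0 < r := by
        by_contra hcon
        push_neg at hcon
        have : mmin F t0 ≤ F r := mmin_le hcon
        omega
      have h1 : mmin (fun t => mmin E t + F t) v ≤ mmin E r + F r := mmin_le hr
      have h2 : mmin E r ≤ E s0 := mmin_le (by omega)
      omega


lemma main_identity (A B C : ℕ → ℤ) (hB : ∀ t, B t ≤ B (t+1)) (hC : ∀ t, C (t+1) ≤ C t + 1)
    (v : ℕ) :
    mmin (fun t => mmin (fun s => A s + (B t + C t - mmin (fun r => B r + C t - C r) t)
        - (B s + C s - mmin (fun r => B r + C s - C r) s)) t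
      + mmin (fun r => B r + C v - C r) v - mmin (fun r => B r + C t - C r) t) v
    = mmin (fun t => mmin (fun s => A s + B t - B s) t + C v - C t) v := by
  have hF : ∀ t, (fun w => B w - C w) t ≤ (fun w => B w - C w) (t+1) + 1 := by
    intro t
    have := hB t
    have := hC t
    simp only
    omega
  have hW : ∀ w, mmin (fun r => B r + C w - C r) w = C w + mmin (fun r => B r - C r) w := by
    intro w
    calc mmin (fun r => B r + C w - C r) w
        = mmin (fun r => (B r - C r) + C w) w := mmin_congr (by intro r _; ring)
      _ = mmin (fun r => B r - C r) w + C w := mmin_add_const _ _ _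
      _ = C w + mmin (fun r => B r - C r) w := by ring
  simp only [hW]
  have hinner : ∀ t, mmin (fun s => A s + (B t + C t - (C t + mmin (fun r => B r - C r) t))
      - (B s + C s - (C s + mmin (fun r => B r - C r) s))) t
      = mmin (fun s => (A s - B s) + mmin (fun r => B r - C r) s) t
        + (B t - mmin (fun r => B r - C r) t) := by
    intro t
    calc mmin (fun s => A s + (B t + C t - (C t + mmin (fun r => B r - C r) t))
          - (B s + C s - (C s + mmin (fun r => B r - C r) s))) t
        = mmin (fun s => ((A s - B s) + mmin (fun r => B r - C r) s)
            + (B t - mmin (fun r => B r - C r) t)) t := mmin_congr (by intro s _; ring)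
      _ = _ := mmin_add_const _ _ _
  calc mmin (fun t => mmin (fun s => A s + (B t + C t - (C t + mmin (fun r => B r - C r) t))
        - (B s + C s - (C s + mmin (fun r => B r - C r) s))) t
        + (C v + mmin (fun r => B r - C r) v) - (C t + mmin (fun r => B r - C r) t)) v
      = mmin (fun t => (mmin (fun s => (A s - B s) + mmin (fun r => B r - C r) s) t
          + (B t - C t) - 2 * mmin (fun r => B r - C r) t)
          + (C v + mmin (fun r => B r - C r) v)) v := by
        apply mmin_congr
        intro t _
        rw [hinner t]
        ring
    _ = mmin (fun t => mmin (fun s => (A s - B s) + mmin (fun r => B r - C r) s) t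
          + (B t - C t) - 2 * mmin (fun r => B r - C r) t) v
          + (C v + mmin (fun r => B r - C r) v) := mmin_add_const _ _ _
    _ = (mmin (fun t => mmin (fun s => (A s - B s) + mmin (fun r => B r - C r) s) t
          + (B t - C t) - 2 * mmin (fun r => B r - C r) t) v
          + mmin (fun r => B r - C r) v) + C v := by ring
    _ = mmin (fun t => mmin (fun s => A s - B s) t + (B t - C t)) v + C v := by
        exact congrArg (· + C v) (star (fun s => A s - B s) (fun w => B w - C w) hF v)
    _ = mmin (fun t => (mmin (fun s => A s - B s) t + (B t - C t)) + C v) v := by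
        rw [mmin_add_const]
    _ = mmin (fun t => mmin (fun s => A s + B t - B s) t + C v - C t) v := by
        apply mmin_congr
        intro t _
        have : mmin (fun s => A s + B t - B s) t = mmin (fun s => (A s - B s) + B t) t :=
          mmin_congr (by intro s _; ring)
        rw [this, mmin_add_const]
        ring

lemma cntL_sort {n : ℕ} (a : Finset (Fin n)) (v : ℕ) :
    cntL (a.sort (· ≤ ·)) v = cnt a v := by
  unfold cntL cnt
  congr 1
  have h1 : Multiset.countP (fun y : Fin n => (y : ℕ) < v) (↑(a.sort (· ≤ ·)))
      = (a.sort (· ≤ ·)).countP (fun y : Fin n => decide ((y : ℕ) < v)) :=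
    Multiset.coe_countP _ _
  rw [← h1, Finset.sort_eq]
  show _ = Multiset.card (Finset.filter (fun y : Fin n => (y : ℕ) < v) a).val
  rw [Finset.filter_val]
  exact Multiset.countP_eq_card_filter (p := (fun y : Fin n => (y : ℕ) < v)) a.val

lemma colMatch_subset {n : ℕ} (a b : Finset (Fin n)) : colMatch a b ⊆ b :=
  (foldl_spec (a.sort (· ≤ ·)) b).1

lemma mem_colMatch_of_mem {n : ℕ} {a b : Finset (Fin n)} {y : Fin n}
    (hya : y ∈ a) (hyb : y ∈ b) : y ∈ colMatch a b :=
  (foldl_spec (a.sort (· ≤ ·)) b).2.2.1 y ((Finset.mem_sort _).2 hya) hyb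

lemma cnt_colMatch {n : ℕ} (a b : Finset (Fin n)) (v : ℕ) :
    cnt (colMatch a b) v = mmin (fun s => cnt a s + cnt b v - cnt b s) v := by
  have h := (foldl_spec (a.sort (· ≤ ·)) b).2.2.2 v
  rw [colMatch, h]
  apply mmin_congr
  intro s _
  rw [cntL_sort]

lemma cnt_union_disjoint {n : ℕ} {S T : Finset (Fin n)} (h : Disjoint S T) (v : ℕ) :
    cnt (S ∪ T) v = cnt S v + cnt T v := by
  unfold cnt
  rw [Finset.filter_union, Finset.card_union_of_disjoint
    (Finset.disjoint_filter_filter h)]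
  push_cast; ring

lemma cnt_vee {n : ℕ} (b c : Finset (Fin n)) (v : ℕ) :
    cnt (vee b c) v = cnt b v + cnt c v - cnt (colMatch b c) v := by
  unfold vee
  have hsub : colMatch b c ⊆ c := colMatch_subset b c
  have hdisj : Disjoint b (c \ colMatch b c) := by
    rw [Finset.disjoint_left]
    intro y hyb hyc
    rw [Finset.mem_sdiff] at hyc
    exact hyc.2 (mem_colMatch_of_mem hyb hyc.1)
  rw [cnt_union_disjoint hdisj, cnt_sdiff hsub]
  ring

lemma cnt_mem {n : ℕ} (S : Finset (Fin n)) (y : Fin n) :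
    cnt S ((y : ℕ) + 1) = cnt S (y : ℕ) + (if y ∈ S then 1 else 0) := by
  have h := cnt_diff_eq S (show (y : ℕ) ≤ (y : ℕ) + 1 by omega)
  have heq : S.filter (fun z : Fin n => (y : ℕ) ≤ (z : ℕ) ∧ (z : ℕ) < (y : ℕ) + 1)
      = if y ∈ S then {y} else ∅ := by
    split <;> rename_i hy
    · ext z
      simp only [Finset.mem_filter, Finset.mem_singleton]
      constructor
      · rintro ⟨hz, h1, h2⟩
        apply Fin.ext; omega
      · rintro rfl
        exact ⟨hy, le_rfl, by omega⟩
    · ext z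
      simp only [Finset.mem_filter, Finset.notMem_empty, iff_false]
      rintro ⟨hz, h1, h2⟩
      have : z = y := Fin.ext (by omega)
      exact hy (this ▸ hz)
  rw [heq] at h
  by_cases hy : y ∈ S
  · rw [if_pos hy] at h ⊢
    simp only [Finset.card_singleton, Nat.cast_one] at h
    omega
  · rw [if_neg hy] at h ⊢
    simp only [Finset.card_empty, Nat.cast_zero] at h
    omega

lemma eq_of_cnt_eq {n : ℕ} {S T : Finset (Fin n)} (h : ∀ v, cnt S v = cnt T v) : S = T := by
  ext y
  have h1 := cnt_mem S y
  have h2 := cnt_mem T y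
  rw [h ((y : ℕ) + 1), h (y : ℕ)] at h1
  by_cases hS : y ∈ S <;> by_cases hT : y ∈ T <;>
    simp [hS, hT] at h1 h2 ⊢ <;> omega

end Braid

/-- For all columns `a, b, c` over `A`: `(a ∧ (b ∨ c)) ∧ (b ∧ c) = (a ∧ b) ∧ c`. -/
theorem wedge_braid (n : ℕ) (hn : 1 ≤ n) (a b c : Finset (Fin n)) :
    wedge (wedge a (vee b c)) (wedge b c) = wedge (wedge a b) c := by
  unfold wedge
  apply Braid.eq_of_cnt_eq
  intro v
  simp only [Braid.cnt_colMatch, Braid.cnt_vee]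
  exact Braid.main_identity (Braid.cnt a) (Braid.cnt b) (Braid.cnt c)
    (fun t => Braid.cnt_mono b (by omega)) (fun t => Braid.cnt_succ_le c t) v
end

section
/- For all columns a and b over A, the concatenated word a·b is Knuth-equivalent to the concatenated word (a ∨ b)·(a ∧ b); that is, the classes of these two words coincide in the plactic monoid Pl(A). -/
/-- The elementary Knuth relations (with contexts): `x z y ≡ z x y` for `x ≤ y < z`
and `y z x ≡ y x z` for `x < y ≤ z`. -/
inductive KnuthRel (n : ℕ) : List (Fin n) → List (Fin n) → Prop
  | knuth1 (u v : List (Fin n)) (x y z : Fin n) (hxy : x ≤ y) (hyz : y < z) :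
      KnuthRel n (u ++ x :: z :: y :: v) (u ++ z :: x :: y :: v)
  | knuth2 (u v : List (Fin n)) (x y z : Fin n) (hxy : x < y) (hyz : y ≤ z) :
      KnuthRel n (u ++ y :: z :: x :: v) (u ++ y :: x :: z :: v)

/-- Two words over `A` represent the same element of the plactic monoid `Pl(A)`. -/
def PlacticEquiv (n : ℕ) : List (Fin n) → List (Fin n) → Prop :=
  Relation.EqvGen (KnuthRel n)

/-- The strictly decreasing word whose letter set is the column `a`. -/
def colWord {n : ℕ} (a : Finset (Fin n)) : List (Fin n) := (a.sort (· ≤ ·)).reverse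

namespace ColProof
open List Relation

variable {n : ℕ}

lemma pe_refl (w : List (Fin n)) : PlacticEquiv n w w := EqvGen.refl w

lemma pe_trans {u v w : List (Fin n)} (h1 : PlacticEquiv n u v) (h2 : PlacticEquiv n v w) :
    PlacticEquiv n u w := EqvGen.trans _ _ _ h1 h2

lemma pe_of_eq {u v : List (Fin n)} (h : u = v) : PlacticEquiv n u v := h ▸ pe_refl u

lemma knuth_ctx {w w' : List (Fin n)} (s t : List (Fin n)) (h : KnuthRel n w w') :
    KnuthRel n (s ++ w ++ t) (s ++ w' ++ t) := by
  cases h with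
  | knuth1 u v x y z hxy hyz =>
    have := KnuthRel.knuth1 (n := n) (s ++ u) (v ++ t) x y z hxy hyz
    simpa [List.append_assoc] using this
  | knuth2 u v x y z hxy hyz =>
    have := KnuthRel.knuth2 (n := n) (s ++ u) (v ++ t) x y z hxy hyz
    simpa [List.append_assoc] using this

lemma pe_ctx {w w' : List (Fin n)} (s t : List (Fin n)) (h : PlacticEquiv n w w') :
    PlacticEquiv n (s ++ w ++ t) (s ++ w' ++ t) := by
  induction h with
  | rel a b hab => exact EqvGen.rel _ _ (knuth_ctx s t hab)
  | refl a => exact EqvGen.refl _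
  | symm a b _ ih => exact EqvGen.symm _ _ ih
  | trans a b c _ _ ih1 ih2 => exact EqvGen.trans _ _ _ ih1 ih2

lemma pe_cons (m : Fin n) {w w' : List (Fin n)} (h : PlacticEquiv n w w') :
    PlacticEquiv n (m :: w) (m :: w') := by
  simpa using pe_ctx [m] [] h

lemma phaseA (m y : Fin n) (hmy : m ≤ y) :
    ∀ (U : List (Fin n)) (s t : List (Fin n)), (∀ u ∈ U, y < u) → U.Pairwise (· > ·) →
      PlacticEquiv n (s ++ m :: (U ++ y :: t)) (s ++ (U ++ m :: y :: t)) := by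
  intro U
  induction U with
  | nil => intro s t _ _; exact pe_refl _
  | cons u U ih =>
    intro s t hU hp
    cases U with
    | nil =>
      refine EqvGen.rel _ _ ?_
      have := KnuthRel.knuth1 (n := n) s t m y u hmy (hU u (by simp))
      simpa using this
    | cons u₂ U' =>
      have hu2y : y < u₂ := hU u₂ (by simp)
      have h1 : KnuthRel n (s ++ m :: u :: u₂ :: (U' ++ y :: t))
          (s ++ u :: m :: u₂ :: (U' ++ y :: t)) :=
        KnuthRel.knuth1 s (U' ++ y :: t) m u₂ u (le_trans hmy hu2y.le)
          ((List.pairwise_cons.mp hp).1 u₂ (by simp))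
      refine pe_trans (EqvGen.rel _ _ (by simpa using h1)) ?_
      have h2 := ih (s ++ [u]) t (fun z hz => hU z (by simp [hz])) (List.pairwise_cons.mp hp).2
      simpa using h2

lemma phaseB :
    ∀ (L : List (Fin n)) (s t : List (Fin n)) (p y : Fin n), p ≤ y → (∀ l ∈ L, l < p) →
      L.Pairwise (· > ·) →
      PlacticEquiv n (s ++ p :: y :: (L ++ t)) (s ++ p :: (L ++ y :: t)) := by
  intro L
  induction L with
  | nil => intro s t p y _ _ _; exact pe_refl _
  | cons l L ih =>
    intro s t p y hpy hL hp
    have h1 : KnuthRel n (s ++ p :: y :: l :: (L ++ t)) (s ++ p :: l :: y :: (L ++ t)) :=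
      KnuthRel.knuth2 s (L ++ t) l p y (hL l (by simp)) hpy
    refine pe_trans (EqvGen.rel _ _ (by simpa using h1)) ?_
    have h2 := ih (s ++ [p]) t l y (le_trans (hL l (by simp)).le hpy)
      (fun z hz => (List.pairwise_cons.mp hp).1 z hz) (List.pairwise_cons.mp hp).2
    simpa using h2

lemma sort_eq_list (s : Finset (Fin n)) (l : List (Fin n)) (hnd : l.Nodup)
    (hmem : ∀ x, x ∈ l ↔ x ∈ s) (hs : l.Pairwise (· ≤ ·)) : s.sort (· ≤ ·) = l := by
  apply List.Perm.eq_of_pairwise' (Finset.pairwise_sort _ _) hs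
  apply List.perm_of_nodup_nodup_toFinset_eq (Finset.sort_nodup _ _) hnd
  rw [Finset.sort_toFinset]
  ext x
  simp [hmem, List.mem_toFinset]

lemma mem_colWord {s : Finset (Fin n)} {z : Fin n} : z ∈ colWord s ↔ z ∈ s := by
  simp [colWord, Finset.mem_sort]

lemma pairwise_colWord (s : Finset (Fin n)) : (colWord s).Pairwise (· > ·) := by
  rw [colWord, List.pairwise_reverse]
  exact (Finset.sortedLT_sort s).pairwise

lemma colWord_insert_max {s : Finset (Fin n)} {m : Fin n} (h : ∀ z ∈ s, z < m) :
    colWord (insert m s) = m :: colWord s := by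
  have hm : m ∉ s := fun hm => absurd (h m hm) (lt_irrefl m)
  have hs : (insert m s).sort (· ≤ ·) = s.sort (· ≤ ·) ++ [m] := by
    apply sort_eq_list
    · rw [List.nodup_append]
      exact ⟨Finset.sort_nodup _ _, List.nodup_singleton m,
        by simpa [List.disjoint_singleton, Finset.mem_sort] using hm⟩
    · intro x
      simp [Finset.mem_sort, Finset.mem_insert, or_comm]
    · rw [List.pairwise_append]
      refine ⟨Finset.pairwise_sort _ _, List.pairwise_singleton _ _, ?_⟩
      intro a ha b hb
      simp only [List.mem_singleton] at hb
      subst hb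
      exact (h a (by simpa [Finset.mem_sort] using ha)).le
  rw [colWord, hs]
  simp [colWord]

lemma colWord_split {s : Finset (Fin n)} {y : Fin n} (hy : y ∈ s) :
    colWord s
      = colWord (s.filter (fun z => y < z)) ++ y :: colWord (s.filter (fun z => z < y)) := by
  have hs : s.sort (· ≤ ·)
      = (s.filter (fun z => z < y)).sort (· ≤ ·) ++ y :: (s.filter (fun z => y < z)).sort (· ≤ ·) := by
    apply sort_eq_list
    · rw [List.nodup_append]
      refine ⟨Finset.sort_nodup _ _, ?_, ?_⟩
      · rw [List.nodup_cons]
        exact ⟨by simp [Finset.mem_sort], Finset.sort_nodup _ _⟩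
      · intro z hz z' hz' hzz
        subst hzz
        simp only [Finset.mem_sort, Finset.mem_filter] at hz
        rcases List.mem_cons.mp hz' with rfl | hz'
        · exact absurd hz.2 (lt_irrefl z)
        · simp only [Finset.mem_sort, Finset.mem_filter] at hz'
          exact absurd (hz.2.trans hz'.2) (lt_irrefl z)
    · intro x
      simp only [List.mem_append, List.mem_cons, Finset.mem_sort, Finset.mem_filter]
      constructor
      · rintro ((⟨h1, _⟩) | rfl | ⟨h1, _⟩) <;> first | exact h1 | exact hy
      · intro hx
        rcases lt_trichotomy x y with h | h | h
        · exact Or.inl ⟨hx, h⟩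
        · exact Or.inr (Or.inl h)
        · exact Or.inr (Or.inr ⟨hx, h⟩)
    · rw [List.pairwise_append]
      refine ⟨Finset.pairwise_sort _ _, ?_, ?_⟩
      · rw [List.pairwise_cons]
        refine ⟨fun z hz => ?_, Finset.pairwise_sort _ _⟩
        simp only [Finset.mem_sort, Finset.mem_filter] at hz
        exact hz.2.le
      · intro a ha c hc
        simp only [Finset.mem_sort, Finset.mem_filter] at ha
        rcases List.mem_cons.mp hc with rfl | hc
        · exact ha.2.le
        · simp only [Finset.mem_sort, Finset.mem_filter] at hc
          exact (ha.2.trans hc.2).le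
  rw [colWord, hs]
  simp [colWord]


def KInv (M : Fin n) (st : Finset (Fin n) × Finset (Fin n)) : Prop :=
  ∀ g ∈ st.2, ∀ z ∈ st.1, M ≤ z → g ≤ z

lemma matchStep_fst {b : Finset (Fin n)} (x : Fin n) (st : Finset (Fin n) × Finset (Fin n))
    (h : st.1 = b \ st.2) : (matchStep x st).1 = b \ (matchStep x st).2 := by
  unfold matchStep
  by_cases hc : (st.1.filter (fun y => x ≤ y)).Nonempty
  · simp only [hc, dif_pos]
    have hg : (st.1.filter (fun y => x ≤ y)).min' hc ∈ st.1 :=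
      Finset.mem_filter.mp (Finset.min'_mem _ hc) |>.1
    ext z
    simp only [Finset.mem_erase, Finset.mem_sdiff, Finset.mem_insert, h] at *
    constructor
    · rintro ⟨hne, hzb, hzD⟩; exact ⟨hzb, by tauto⟩
    · rintro ⟨hzb, hz⟩; push_neg at hz; exact ⟨hz.1, hzb, hz.2⟩
  · simpa [hc] using h

lemma kinv_step {M x : Fin n} (hx : x ≤ M) {st : Finset (Fin n) × Finset (Fin n)}
    (h : KInv M st) : KInv M (matchStep x st) := by
  unfold matchStep
  by_cases hc : (st.1.filter (fun y => x ≤ y)).Nonempty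
  · simp only [hc, dif_pos]
    intro g hg z hz hMz
    simp only [Finset.mem_insert] at hg
    have hz1 : z ∈ st.1 := Finset.mem_of_mem_erase hz
    rcases hg with rfl | hg
    · exact Finset.min'_le _ z (Finset.mem_filter.mpr ⟨hz1, le_trans hx hMz⟩)
    · exact h g hg z hz1 hMz
  · simpa [hc] using h


lemma fold_invariant {b : Finset (Fin n)} {M : Fin n} :
    ∀ (l : List (Fin n)) (st : Finset (Fin n) × Finset (Fin n)),
      (∀ x ∈ l, x ≤ M) → st.1 = b \ st.2 → KInv M st →
      (l.foldl (fun st x => matchStep x st) st).1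
          = b \ (l.foldl (fun st x => matchStep x st) st).2
        ∧ KInv M (l.foldl (fun st x => matchStep x st) st) := by
  intro l
  induction l with
  | nil => intro st _ h1 h2; exact ⟨h1, h2⟩
  | cons x l ih =>
    intro st hl h1 h2
    exact ih (matchStep x st) (fun z hz => hl z (by simp [hz]))
      (matchStep_fst x st h1) (kinv_step (hl x (by simp)) h2)


lemma sort_insert_max {s : Finset (Fin n)} {m : Fin n} (h : ∀ z ∈ s, z < m) :
    (insert m s).sort (· ≤ ·) = s.sort (· ≤ ·) ++ [m] := by
  have hm : m ∉ s := fun hm => absurd (h m hm) (lt_irrefl m)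
  apply sort_eq_list
  · rw [List.nodup_append]
    exact ⟨Finset.sort_nodup _ _, List.nodup_singleton m,
      by simpa [List.disjoint_singleton, Finset.mem_sort] using hm⟩
  · intro x
    simp [Finset.mem_sort, Finset.mem_insert, or_comm]
  · rw [List.pairwise_append]
    refine ⟨Finset.pairwise_sort _ _, List.pairwise_singleton _ _, ?_⟩
    intro a ha c hc
    simp only [List.mem_singleton] at hc
    subst hc
    exact (h a (by simpa [Finset.mem_sort] using ha)).le

theorem main_thm (n : ℕ) (a b : Finset (Fin n)) :
    PlacticEquiv n (colWord a ++ colWord b) (colWord (vee a b) ++ colWord (wedge a b)) := by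
  induction a using Finset.induction_on_max with
  | empty =>
    apply pe_of_eq
    simp [vee, wedge, colMatch, colWord]
  | insert m a' hlt ih =>
    classical
    set D := colMatch a' b with hDdef
    set st := ((a'.sort (· ≤ ·)).foldl (fun st x => matchStep x st)
      (b, (∅ : Finset (Fin n)))) with hstdef
    have hinv := fold_invariant (b := b) (M := m) (a'.sort (· ≤ ·)) (b, ∅)
      (fun x hx => (hlt x ((Finset.mem_sort _).mp hx)).le) (by simp)
      (by intro g hg; simp at hg)
    rw [← hstdef] at hinv
    have hst2 : st.2 = D := rfl
    have hst1 : st.1 = b \ D := by rw [← hst2]; exact hinv.1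
    have hsort : (insert m a').sort (· ≤ ·) = a'.sort (· ≤ ·) ++ [m] := sort_insert_max hlt
    have hcm : colMatch (insert m a') b = (matchStep m st).2 := by
      rw [colMatch, hsort, List.foldl_append]
      rfl
    have hcwa : colWord (insert m a') = m :: colWord a' := colWord_insert_max hlt
    by_cases hc : ((b \ D).filter (fun z => m ≤ z)).Nonempty
    · -- matched case
      set y := ((b \ D).filter (fun z => m ≤ z)).min' hc with hydef
      have hymem' := Finset.mem_filter.mp (Finset.min'_mem _ hc)
      have hyb : y ∈ b \ D := hymem'.1
      have hym : m ≤ y := hymem'.2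
      have hmin : ∀ z ∈ b \ D, m ≤ z → y ≤ z := fun z hz hmz =>
        Finset.min'_le _ z (Finset.mem_filter.mpr ⟨hz, hmz⟩)
      have hDy : ∀ g ∈ D, g < y := by
        intro g hg
        have h1 : g ≤ y := hinv.2 g hg y (hst1 ▸ hyb) hym
        have h2 : g ≠ y := fun h => (Finset.mem_sdiff.mp hyb).2 (h ▸ hg)
        exact lt_of_le_of_ne h1 h2
      have hms : matchStep m st = ((b \ D).erase y, insert y D) := by
        rw [matchStep]
        simp only [hst1, hst2]
        rw [dif_pos hc]
      have hcm2 : colMatch (insert m a') b = insert y D := by rw [hcm, hms]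
      set c := vee a' b with hcdef
      have hyc : y ∈ c := Finset.mem_union_right _ hyb
      have hLm : ∀ z ∈ c, z < y → z < m := by
        intro z hz hzy
        rcases Finset.mem_union.mp hz with hz' | hz'
        · exact hlt z hz'
        · by_contra hcon
          exact absurd (hmin z hz' (le_of_not_gt hcon)) (not_le.mpr hzy)
      have hay : ∀ z ∈ a', z ≠ y := fun z hz => ne_of_lt (lt_of_lt_of_le (hlt z hz) hym)
      have hv2 : vee (insert m a') b = insert m (c.erase y) := by
        ext z
        simp only [vee, hcm2, Finset.mem_insert, Finset.mem_union, Finset.mem_sdiff,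
          Finset.mem_erase, hcdef]
        constructor
        · rintro ((rfl | hz) | ⟨hzb, hzn⟩)
          · exact Or.inl rfl
          · exact Or.inr ⟨hay z hz, Or.inl hz⟩
          · rw [not_or] at hzn
            exact Or.inr ⟨hzn.1, Or.inr ⟨hzb, hzn.2⟩⟩
        · rintro (rfl | ⟨hne, hz | ⟨hzb, hzD⟩⟩)
          · exact Or.inl (Or.inl rfl)
          · exact Or.inl (Or.inr hz)
          · exact Or.inr ⟨hzb, by simp [hne, hDdef, hzD]⟩
      have hfU : (insert m (c.erase y)).filter (fun z => m < z)
          = c.filter (fun z => y < z) := by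
        ext z
        simp only [Finset.mem_filter, Finset.mem_insert, Finset.mem_erase]
        constructor
        · rintro ⟨rfl | ⟨hne, hz⟩, hmz⟩
          · exact absurd hmz (lt_irrefl _)
          · refine ⟨hz, lt_of_le_of_ne ?_ (Ne.symm hne)⟩
            by_contra hcon
            exact absurd (hLm z hz (lt_of_not_ge hcon)) (not_lt.mpr hmz.le)
        · rintro ⟨hz, hyz⟩
          exact ⟨Or.inr ⟨(ne_of_gt hyz), hz⟩, lt_of_le_of_lt hym hyz⟩
      have hfL : (insert m (c.erase y)).filter (fun z => z < m)
          = c.filter (fun z => z < y) := by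
        ext z
        simp only [Finset.mem_filter, Finset.mem_insert, Finset.mem_erase]
        constructor
        · rintro ⟨rfl | ⟨hne, hz⟩, hmz⟩
          · exact absurd hmz (lt_irrefl _)
          · exact ⟨hz, lt_of_lt_of_le hmz hym⟩
        · rintro ⟨hz, hzy⟩
          exact ⟨Or.inr ⟨ne_of_lt hzy, hz⟩, hLm z hz hzy⟩
      have hcwv : colWord (vee (insert m a') b)
          = colWord (c.filter (fun z => y < z)) ++ m :: colWord (c.filter (fun z => z < y)) := by
        rw [hv2, colWord_split (Finset.mem_insert_self m _), hfU, hfL]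
      have hcww : colWord (wedge (insert m a') b) = y :: colWord D := by
        rw [wedge, hcm2, colWord_insert_max hDy]
      have hcwc : colWord c
          = colWord (c.filter (fun z => y < z)) ++ y :: colWord (c.filter (fun z => z < y)) :=
        colWord_split hyc
      rw [hcwa, hcwv, hcww]
      refine pe_trans (by simpa using pe_cons m ih) ?_
      rw [hcwc]
      have hA := phaseA m y hym (colWord (c.filter (fun z => y < z))) []
        (colWord (c.filter (fun z => z < y)) ++ colWord D)
        (fun u hu => (Finset.mem_filter.mp (mem_colWord.mp hu)).2)
        (pairwise_colWord _)
      have hB := phaseB (colWord (c.filter (fun z => z < y)))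
        (colWord (c.filter (fun z => y < z))) (colWord D) m y hym
        (fun l hl => by
          have h := Finset.mem_filter.mp (mem_colWord.mp hl)
          exact hLm l h.1 h.2)
        (pairwise_colWord _)
      have hwD : wedge a' b = D := rfl
      refine pe_trans (pe_of_eq (by simp [hwD])) (pe_trans hA (pe_trans hB (pe_of_eq (by simp))))
    · -- unmatched case
      have hms : matchStep m st = st := by
        rw [matchStep]
        simp only [hst1]
        rw [dif_neg hc]
      have hcm2 : colMatch (insert m a') b = D := by rw [hcm, hms]; exact hst2
      have hcmax : ∀ z ∈ vee a' b, z < m := by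
        intro z hz
        rcases Finset.mem_union.mp hz with hz' | hz'
        · exact hlt z hz'
        · by_contra hcon
          exact hc ⟨z, Finset.mem_filter.mpr ⟨hz', le_of_not_gt hcon⟩⟩
      have hv : vee (insert m a') b = insert m (vee a' b) := by
        rw [vee, hcm2, vee, ← hDdef, Finset.insert_union]
      have hw : wedge (insert m a') b = wedge a' b := hcm2
      rw [hcwa, hv, hw, colWord_insert_max hcmax]
      simpa using pe_cons m ih

end ColProof

/-- For all columns `a` and `b` over `A`, the concatenated word `a·b` is Knuth-equivalent
to the concatenated word `(a ∨ b)·(a ∧ b)`; i.e. their classes coincide in `Pl(A)`. -/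
theorem col_mul_eq_vee_mul_wedge (n : ℕ) (hn : 1 ≤ n) (a b : Finset (Fin n)) :
    PlacticEquiv n (colWord a ++ colWord b) (colWord (vee a b) ++ colWord (wedge a b)) :=
  ColProof.main_thm n a b
end

section
/- Let a, b, c, d be columns over A. (i) If a ∨ b = a and a ∧ b = b, then (a ∧ (b ∨ c)) ∨ (b ∧ c) = a ∧ (b ∨ c); in particular the word (a ∧ (b ∨ c))·(b ∧ c) is already in normal form (its leading pair does not occur). (ii) If c ∨ d = c and c ∧ d = d, then (b ∨ c) ∧ ((b ∧ c) ∨ d) = (b ∧ c) ∨ d. -/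
namespace TwoHoles

variable {n : ℕ}

/-- prefix count: number of elements of `s` with value `< k`, as an integer. -/
def cnt (s : Finset (Fin n)) (k : ℕ) : ℤ :=
  ((s.filter (fun y : Fin n => (y : ℕ) < k)).card : ℤ)

def cntL (l : List (Fin n)) (k : ℕ) : ℤ :=
  ((l.filter (fun y : Fin n => decide ((y : ℕ) < k))).length : ℤ)

def poolStep (x : Fin n) (p : Finset (Fin n)) : Finset (Fin n) :=
  let cand := p.filter (fun y => x ≤ y)
  if h : cand.Nonempty then p.erase (cand.min' h) else p

def runPool (l : List (Fin n)) (p : Finset (Fin n)) : Finset (Fin n) :=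
  l.foldl (fun q x => poolStep x q) p

/-- running max `max (0, max_{j ≤ k} T j)` assuming `T 0 = 0`. -/
def Mf (T : ℕ → ℤ) : ℕ → ℤ
  | 0 => 0
  | (k+1) => max (Mf T k) (T (k+1))

lemma cnt_zero (s : Finset (Fin n)) : cnt s 0 = 0 := by simp [cnt]

lemma cnt_nonneg (s : Finset (Fin n)) (k : ℕ) : 0 ≤ cnt s k := Int.natCast_nonneg _

lemma cnt_mono (s : Finset (Fin n)) {k m : ℕ} (h : k ≤ m) : cnt s k ≤ cnt s m := by
  unfold cnt
  have : s.filter (fun y : Fin n => (y : ℕ) < k) ⊆ s.filter (fun y : Fin n => (y : ℕ) < m) := by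
    intro y hy
    simp only [Finset.mem_filter] at hy ⊢
    exact ⟨hy.1, lt_of_lt_of_le hy.2 h⟩
  exact_mod_cast Finset.card_le_card this

lemma cnt_congr {p : Finset (Fin n)} {j m : ℕ} (hmj : m ≤ j)
    (h : ∀ y ∈ p, (y : ℕ) < j → (y : ℕ) < m) : cnt p j = cnt p m := by
  unfold cnt
  congr 2
  apply Finset.filter_congr
  intro y hy
  constructor
  · exact h y hy
  · intro hm; omega

lemma cnt_erase {p : Finset (Fin n)} {μ : Fin n} (hμ : μ ∈ p) (j : ℕ) :
    cnt (p.erase μ) j = cnt p j - (if (μ : ℕ) < j then 1 else 0) := by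
  unfold cnt
  rw [Finset.filter_erase]
  by_cases h : (μ : ℕ) < j
  · rw [if_pos h, Finset.card_erase_of_mem (by simp [hμ, h])]
    have hpos : 0 < (p.filter (fun y : Fin n => (y : ℕ) < j)).card :=
      Finset.card_pos.2 ⟨μ, by simp [hμ, h]⟩
    omega
  · rw [if_neg h, Finset.erase_eq_of_notMem (by simp [h])]
    ring

lemma cnt_sdiff {p t : Finset (Fin n)} (h : t ⊆ p) (j : ℕ) :
    cnt (p \ t) j = cnt p j - cnt t j := by
  unfold cnt
  have hset : (p \ t).filter (fun y : Fin n => (y : ℕ) < j)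
      = p.filter (fun y : Fin n => (y : ℕ) < j) \ t.filter (fun y : Fin n => (y : ℕ) < j) := by
    ext y
    simp only [Finset.mem_filter, Finset.mem_sdiff]
    tauto
  rw [hset, Finset.card_sdiff_of_subset (Finset.filter_subset_filter _ h)]
  have := Finset.card_le_card (Finset.filter_subset_filter
    (fun y : Fin n => (y : ℕ) < j) h)
  push_cast [Nat.cast_sub this]
  ring

lemma cnt_union_disjoint {a t : Finset (Fin n)} (h : Disjoint a t) (j : ℕ) :
    cnt (a ∪ t) j = cnt a j + cnt t j := by
  unfold cnt
  rw [Finset.filter_union, Finset.card_union_of_disjoint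
    (Finset.disjoint_filter_filter h)]
  push_cast; ring

lemma cnt_top (s : Finset (Fin n)) : cnt s n = s.card := by
  unfold cnt
  congr 2
  apply Finset.filter_true_of_mem
  intro y _; exact y.isLt

lemma cnt_eq_zero_iff {s : Finset (Fin n)} (h : cnt s n = 0) : s = ∅ := by
  rw [cnt_top] at h
  exact Finset.card_eq_zero.1 (by exact_mod_cast h)

lemma cntL_nil (k : ℕ) : cntL ([] : List (Fin n)) k = 0 := by simp [cntL]

lemma cntL_cons (x : Fin n) (l : List (Fin n)) (k : ℕ) :
    cntL (x :: l) k = cntL l k + (if (x : ℕ) < k then 1 else 0) := by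
  unfold cntL
  by_cases h : (x : ℕ) < k <;> simp [h]

lemma cntL_mono (l : List (Fin n)) {k m : ℕ} (h : k ≤ m) : cntL l k ≤ cntL l m := by
  induction l with
  | nil => simp [cntL_nil]
  | cons x l ih =>
    rw [cntL_cons, cntL_cons]
    have : (if (x : ℕ) < k then (1:ℤ) else 0) ≤ (if (x : ℕ) < m then 1 else 0) := by
      split_ifs <;> omega
    omega



lemma Mf_zero (T : ℕ → ℤ) : Mf T 0 = 0 := rfl

lemma Mf_succ (T : ℕ → ℤ) (k : ℕ) : Mf T (k+1) = max (Mf T k) (T (k+1)) := rfl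

lemma Mf_nonneg (T : ℕ → ℤ) (k : ℕ) : 0 ≤ Mf T k := by
  induction k with
  | zero => simp [Mf_zero]
  | succ k ih => rw [Mf_succ]; exact le_trans ih (le_max_left _ _)

lemma Mf_mono (T : ℕ → ℤ) {k m : ℕ} (h : k ≤ m) : Mf T k ≤ Mf T m := by
  induction m with
  | zero => simp_all
  | succ m ih =>
    rcases Nat.lt_or_ge k (m+1) with h' | h'
    · exact le_trans (ih (by omega)) (by rw [Mf_succ]; exact le_max_left _ _)
    · have : k = m + 1 := by omega
      subst this; rfl

lemma le_Mf {T : ℕ → ℤ} (hT0 : T 0 ≤ 0) (k : ℕ) : T k ≤ Mf T k := by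
  cases k with
  | zero => simpa [Mf_zero] using hT0
  | succ k => rw [Mf_succ]; exact le_max_right _ _

lemma Mf_le {T : ℕ → ℤ} {B : ℤ} {k : ℕ} (hB : 0 ≤ B) (h : ∀ j ≤ k, T j ≤ B) :
    Mf T k ≤ B := by
  induction k with
  | zero => simpa [Mf_zero] using hB
  | succ k ih =>
    rw [Mf_succ]
    exact max_le (ih (fun j hj => h j (by omega))) (h (k+1) le_rfl)

lemma Mf_eq_zero {T : ℕ → ℤ} {k : ℕ} (h : ∀ j ≤ k, T j ≤ 0) : Mf T k = 0 :=
  le_antisymm (Mf_le le_rfl h) (Mf_nonneg T k)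

lemma Mf_congr {T T' : ℕ → ℤ} (h1 : ∀ j, T j ≤ T' j)
    (h2 : ∀ j, T' j ≤ Mf T j ∨ T' j = T j) (k : ℕ) : Mf T' k = Mf T k := by
  induction k with
  | zero => rfl
  | succ k ih =>
    rw [Mf_succ, Mf_succ, ih]
    rcases h2 (k+1) with h | h
    · rw [Mf_succ] at h
      apply le_antisymm
      · exact max_le (le_max_left _ _) h
      · exact max_le (le_max_left _ _) (le_trans (h1 (k+1)) (le_max_right _ _))
    · rw [h]

lemma Mf_congr_fun {T T' : ℕ → ℤ} (h : ∀ j, T j = T' j) (k : ℕ) : Mf T k = Mf T' k := by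
  have : T = T' := funext h
  rw [this]

lemma Mf_eq_self {T : ℕ → ℤ} (hmono : ∀ k m, k ≤ m → T k ≤ T m) (h0 : T 0 = 0) (k : ℕ) :
    Mf T k = T k := by
  induction k with
  | zero => simp [Mf_zero, h0]
  | succ k ih =>
    rw [Mf_succ, ih]
    exact max_eq_right (hmono k (k+1) (by omega))

lemma poolStep_cases (x : Fin n) (p : Finset (Fin n)) :
    (poolStep x p = p ∧ ∀ y ∈ p, ¬ x ≤ y) ∨
    ∃ μ ∈ p, x ≤ μ ∧ (∀ y ∈ p, x ≤ y → μ ≤ y) ∧ poolStep x p = p.erase μ := by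
  unfold poolStep
  by_cases h : (p.filter (fun y => x ≤ y)).Nonempty
  · right
    refine ⟨(p.filter (fun y => x ≤ y)).min' h, ?_, ?_, ?_, by simp [h]⟩
    · exact (Finset.mem_filter.1 ((p.filter (fun y => x ≤ y)).min'_mem h)).1
    · exact (Finset.mem_filter.1 ((p.filter (fun y => x ≤ y)).min'_mem h)).2
    · intro y hy hxy
      exact Finset.min'_le _ y (Finset.mem_filter.2 ⟨hy, hxy⟩)
  · left
    constructor
    · simp [h]
    · intro y hy hxy
      exact h ⟨y, Finset.mem_filter.2 ⟨hy, hxy⟩⟩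

lemma poolStep_subset (x : Fin n) (p : Finset (Fin n)) : poolStep x p ⊆ p := by
  rcases poolStep_cases x p with ⟨h, -⟩ | ⟨μ, -, -, -, h⟩ <;> rw [h]
  exact Finset.erase_subset _ _

lemma not_mem_poolStep_self (x : Fin n) (p : Finset (Fin n)) : x ∉ poolStep x p := by
  rcases poolStep_cases x p with ⟨h, h2⟩ | ⟨μ, hμp, hxμ, hmin, h⟩ <;> rw [h]
  · intro hx; exact h2 x hx le_rfl
  · intro hx
    rcases Finset.mem_erase.1 hx with ⟨hne, hxp⟩
    exact hne (le_antisymm (hmin x hxp le_rfl) hxμ).symm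

lemma runPool_nil (p : Finset (Fin n)) : runPool [] p = p := rfl

lemma runPool_cons (x : Fin n) (l : List (Fin n)) (p : Finset (Fin n)) :
    runPool (x :: l) p = runPool l (poolStep x p) := rfl

lemma runPool_subset (l : List (Fin n)) (p : Finset (Fin n)) : runPool l p ⊆ p := by
  induction l generalizing p with
  | nil => exact Finset.Subset.refl _
  | cons x l ih => exact (ih (poolStep x p)).trans (poolStep_subset x p)

lemma not_mem_runPool {l : List (Fin n)} {x : Fin n} (hx : x ∈ l) (p : Finset (Fin n)) :
    x ∉ runPool l p := by
  induction l generalizing p with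
  | nil => simp at hx
  | cons a l ih =>
    rw [runPool_cons]
    rcases List.mem_cons.1 hx with rfl | hx
    · intro hmem
      exact not_mem_poolStep_self x p (runPool_subset l _ hmem)
    · exact ih hx _

lemma foldl_fst (l : List (Fin n)) (p m : Finset (Fin n)) :
    (l.foldl (fun st x => matchStep x st) (p, m)).1 = runPool l p := by
  induction l generalizing p m with
  | nil => rfl
  | cons x l ih =>
    rw [List.foldl_cons, runPool_cons]
    have hms : matchStep x (p, m) = (poolStep x p, (matchStep x (p,m)).2) := by
      unfold matchStep poolStep
      by_cases h : (p.filter (fun y => x ≤ y)).Nonempty <;> simp [h]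
    rw [hms, ih]

lemma foldl_snd (l : List (Fin n)) (p m : Finset (Fin n)) :
    (l.foldl (fun st x => matchStep x st) (p, m)).2 = m ∪ (p \ runPool l p) := by
  induction l generalizing p m with
  | nil => simp [runPool_nil]
  | cons x l ih =>
    rw [List.foldl_cons, runPool_cons]
    by_cases h : (p.filter (fun y => x ≤ y)).Nonempty
    · have hms : matchStep x (p, m)
          = (p.erase ((p.filter (fun y => x ≤ y)).min' h),
             insert ((p.filter (fun y => x ≤ y)).min' h) m) := by
        unfold matchStep; simp [h]
      have hps : poolStep x p = p.erase ((p.filter (fun y => x ≤ y)).min' h) := by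
        unfold poolStep; simp [h]
      set μ := (p.filter (fun y => x ≤ y)).min' h with hμ
      have hμp : μ ∈ p := (Finset.mem_filter.1 ((p.filter (fun y => x ≤ y)).min'_mem h)).1
      rw [hms, ih, hps]
      have hμr : μ ∉ runPool l (p.erase μ) := by
        intro hmem
        exact (Finset.notMem_erase μ p) (runPool_subset l _ hmem)
      ext y
      simp only [Finset.mem_union, Finset.mem_insert, Finset.mem_sdiff, Finset.mem_erase]
      by_cases hy : y = μ
      · subst hy; simp [hμp, hμr]
      · simp only [hy]; tauto
    · have hms : matchStep x (p, m) = (p, m) := by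
        unfold matchStep; simp [h]
      have hps : poolStep x p = p := by
        unfold poolStep; simp [h]
      rw [hms, ih, hps]


lemma cntL_nonneg (l : List (Fin n)) (k : ℕ) : 0 ≤ cntL l k := Int.natCast_nonneg _

lemma runPool_cnt (l : List (Fin n)) (hs : l.Pairwise (· ≤ ·)) (p : Finset (Fin n)) (k : ℕ) :
    cnt (runPool l p) k = Mf (fun j => cnt p j - cntL l j) k := by
  induction l generalizing p k with
  | nil =>
    rw [runPool_nil, Mf_congr_fun (T' := fun j => cnt p j) (fun j => by rw [cntL_nil]; ring)]
    exact (Mf_eq_self (fun a b hab => cnt_mono p hab) (cnt_zero p) k).symm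
  | cons x l ih =>
    rcases List.pairwise_cons.1 hs with ⟨hxl, hl⟩
    have hT0 : cnt p 0 - cntL (x :: l) 0 ≤ 0 := by
      rw [cnt_zero]
      have := cntL_nonneg (x :: l) 0
      omega
    by_cases h : (p.filter (fun y => x ≤ y)).Nonempty
    · -- match the minimum candidate μ
      have hps : poolStep x p = p.erase ((p.filter (fun y => x ≤ y)).min' h) := by
        unfold poolStep; simp [h]
      set μ := (p.filter (fun y => x ≤ y)).min' h with hμdef
      have hμmem := (p.filter (fun y => x ≤ y)).min'_mem h
      have hμp : μ ∈ p := (Finset.mem_filter.1 hμmem).1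
      have hxμ : x ≤ μ := (Finset.mem_filter.1 hμmem).2
      have hmin : ∀ y ∈ p, x ≤ y → μ ≤ y := fun y hy hxy =>
        Finset.min'_le _ y (Finset.mem_filter.2 ⟨hy, hxy⟩)
      rw [runPool_cons, hps, ih hl (p.erase μ) k]
      apply Mf_congr (T := fun j => cnt p j - cntL (x :: l) j)
      · intro j
        rw [cnt_erase hμp, cntL_cons]
        have hxm : (x : ℕ) ≤ (μ : ℕ) := hxμ
        split_ifs <;> omega
      · intro j
        by_cases hj1 : (μ : ℕ) < j
        · right
          rw [cnt_erase hμp, cntL_cons, if_pos hj1, if_pos (by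
            have hxm : (x : ℕ) ≤ (μ : ℕ) := hxμ
            omega)]
          ring
        · by_cases hj2 : (x : ℕ) < j
          · left
            have hcnt1 : cnt (p.erase μ) j = cnt p j := by
              rw [cnt_erase hμp, if_neg hj1]; ring
            have hcnt2 : cnt p j = cnt p (x : ℕ) := by
              apply cnt_congr (le_of_lt hj2)
              intro y hy hyj
              by_contra hc
              have hxy : x ≤ y := by
                rw [Fin.le_def]; omega
              have := hmin y hy hxy
              rw [Fin.le_def] at this
              omega
            have hkey : cnt (p.erase μ) j - cntL l j
                ≤ cnt p (x : ℕ) - cntL (x :: l) (x : ℕ) := by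
              rw [hcnt1, hcnt2, cntL_cons, if_neg (lt_irrefl _)]
              have := cntL_mono l (le_of_lt hj2)
              omega
            exact hkey.trans ((le_Mf hT0 (x : ℕ)).trans
              (Mf_mono _ (le_of_lt hj2)))
          · right
            rw [cnt_erase hμp, cntL_cons, if_neg hj1, if_neg hj2]
            ring
    · have hps : poolStep x p = p := by
        unfold poolStep; simp [h]
      have hplt : ∀ y ∈ p, (y : ℕ) < (x : ℕ) := by
        intro y hy
        have : ¬ x ≤ y := fun hxy => h ⟨y, Finset.mem_filter.2 ⟨hy, hxy⟩⟩
        rw [Fin.le_def] at this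
        omega
      rw [runPool_cons, hps, ih hl p k]
      apply Mf_congr (T := fun j => cnt p j - cntL (x :: l) j)
      · intro j
        rw [cntL_cons]
        split_ifs <;> omega
      · intro j
        by_cases hj : (x : ℕ) < j
        · left
          have hcnt2 : cnt p j = cnt p (x : ℕ) := by
            apply cnt_congr (le_of_lt hj)
            intro y hy _
            exact hplt y hy
          have hkey : cnt p j - cntL l j ≤ cnt p (x : ℕ) - cntL (x :: l) (x : ℕ) := by
            rw [hcnt2, cntL_cons, if_neg (lt_irrefl _)]
            have := cntL_mono l (le_of_lt hj)
            omega
          exact hkey.trans ((le_Mf hT0 (x : ℕ)).trans (Mf_mono _ (le_of_lt hj)))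
        · right
          rw [cntL_cons, if_neg hj]
          ring

lemma cntL_sort (a : Finset (Fin n)) (k : ℕ) : cntL (a.sort (· ≤ ·)) k = cnt a k := by
  unfold cntL cnt
  congr 1
  rw [List.Perm.length_eq (List.Perm.filter _ (Finset.sort_perm_toList a (· ≤ ·)))]
  rw [Finset.card_def, Finset.filter_val, ← Multiset.coe_card]
  congr 1
  rw [← Multiset.filter_coe (fun y : Fin n => (y : ℕ) < k) a.toList, Finset.toList,
    Multiset.coe_toList]

lemma colMatch_eq (a b : Finset (Fin n)) :
    colMatch a b = b \ runPool (a.sort (· ≤ ·)) b := by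
  unfold colMatch
  rw [foldl_snd]
  simp

lemma cnt_colMatch (a b : Finset (Fin n)) (k : ℕ) :
    cnt (colMatch a b) k = cnt b k - Mf (fun j => cnt b j - cnt a j) k := by
  rw [colMatch_eq, cnt_sdiff (runPool_subset _ _),
    runPool_cnt _ (Finset.pairwise_sort _ _),
    Mf_congr_fun (T' := fun j => cnt b j - cnt a j) (fun j => by simp only [cntL_sort])]

lemma disjoint_runPool (a b : Finset (Fin n)) :
    Disjoint a (runPool (a.sort (· ≤ ·)) b) :=
  Finset.disjoint_left.2 fun x hxa hxr =>
    not_mem_runPool ((Finset.mem_sort (· ≤ ·)).2 hxa) b hxr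

lemma vee_eq (a b : Finset (Fin n)) :
    vee a b = a ∪ runPool (a.sort (· ≤ ·)) b := by
  unfold vee
  rw [colMatch_eq, Finset.sdiff_sdiff_eq_self (runPool_subset _ _)]

lemma cnt_vee (a b : Finset (Fin n)) (k : ℕ) :
    cnt (vee a b) k = cnt a k + Mf (fun j => cnt b j - cnt a j) k := by
  rw [vee_eq, cnt_union_disjoint (disjoint_runPool a b),
    runPool_cnt _ (Finset.pairwise_sort _ _),
    Mf_congr_fun (T' := fun j => cnt b j - cnt a j) (fun j => by simp only [cntL_sort])]

lemma cnt_wedge (a b : Finset (Fin n)) (k : ℕ) :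
    cnt (wedge a b) k = cnt b k - Mf (fun j => cnt b j - cnt a j) k :=
  cnt_colMatch a b k

lemma of_wedge_eq {a b : Finset (Fin n)} (h : wedge a b = b) (k : ℕ) :
    cnt b k ≤ cnt a k := by
  have hcm : colMatch a b = b := h
  rw [colMatch_eq] at hcm
  have hrp : runPool (a.sort (· ≤ ·)) b = ∅ := by
    apply Finset.eq_empty_iff_forall_notMem.2
    intro y hy
    have hyb : y ∈ b := runPool_subset _ _ hy
    rw [← hcm] at hyb
    exact (Finset.mem_sdiff.1 hyb).2 hy
  have h0 : (0 : ℤ) = Mf (fun j => cnt b j - cnt a j) k := by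
    rw [← Mf_congr_fun (T := fun j => cnt b j - cntL (a.sort (· ≤ ·)) j)
      (fun j => by simp only [cntL_sort]), ← runPool_cnt _ (Finset.pairwise_sort _ _), hrp]
    simp [cnt]
  have := le_Mf (T := fun j => cnt b j - cnt a j) (by simp [cnt_zero]) k
  omega

lemma runPool_empty_of_le {X Y : Finset (Fin n)} (h : ∀ k, cnt Y k ≤ cnt X k) :
    runPool (X.sort (· ≤ ·)) Y = ∅ := by
  apply cnt_eq_zero_iff
  rw [runPool_cnt _ (Finset.pairwise_sort _ _),
    Mf_congr_fun (T' := fun j => cnt Y j - cnt X j) (fun j => by simp only [cntL_sort])]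
  exact Mf_eq_zero fun j _ => by have := h j; omega

lemma vee_eq_left {X Y : Finset (Fin n)} (h : ∀ k, cnt Y k ≤ cnt X k) :
    vee X Y = X := by
  rw [vee_eq, runPool_empty_of_le h, Finset.union_empty]

lemma wedge_eq_right {X Y : Finset (Fin n)} (h : ∀ k, cnt Y k ≤ cnt X k) :
    wedge X Y = Y := by
  show colMatch X Y = Y
  rw [colMatch_eq, runPool_empty_of_le h, Finset.sdiff_empty]

end TwoHoles

open TwoHoles in
/-- (i) If `a ∨ b = a` and `a ∧ b = b`, then `(a ∧ (b ∨ c)) ∨ (b ∧ c) = a ∧ (b ∨ c)`;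
in particular the word `(a ∧ (b ∨ c))·(b ∧ c)` is already in normal form, i.e. it is
not a leading term (a word `x·y` being a leading term iff `x ∨ y ≠ x` and `x ∧ y ≠ y`).
(ii) If `c ∨ d = c` and `c ∧ d = d`, then `(b ∨ c) ∧ ((b ∧ c) ∨ d) = (b ∧ c) ∨ d`. -/
theorem two_holes (n : ℕ) (hn : 1 ≤ n) (a b c d : Finset (Fin n)) :
    ((vee a b = a → wedge a b = b →
        vee (wedge a (vee b c)) (wedge b c) = wedge a (vee b c) ∧
        ¬(vee (wedge a (vee b c)) (wedge b c) ≠ wedge a (vee b c) ∧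
          wedge (wedge a (vee b c)) (wedge b c) ≠ wedge b c))) ∧
    (vee c d = c → wedge c d = d →
        wedge (vee b c) (vee (wedge b c) d) = vee (wedge b c) d) := by

  constructor
  · intro _ h2
    have hba : ∀ k, cnt b k ≤ cnt a k := of_wedge_eq h2
    have hmain : ∀ k, cnt (wedge b c) k ≤ cnt (wedge a (vee b c)) k := by
      intro k
      rw [cnt_wedge b c k, cnt_wedge a (vee b c) k, cnt_vee b c k,
        Mf_congr_fun (T := fun j => cnt (vee b c) j - cnt a j)
          (T' := fun j => (cnt b j + Mf (fun i => cnt c i - cnt b i) j) - cnt a j)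
          (fun j => by simp only [cnt_vee])]
      have hM2 : Mf (fun j => (cnt b j + Mf (fun i => cnt c i - cnt b i) j) - cnt a j) k
          ≤ Mf (fun i => cnt c i - cnt b i) k := by
        apply Mf_le (Mf_nonneg _ k)
        intro j hj
        have h1 := hba j
        have h2 := Mf_mono (fun i => cnt c i - cnt b i) hj
        omega
      have hcb : cnt c k - cnt b k ≤ Mf (fun i => cnt c i - cnt b i) k :=
        le_Mf (by simp [cnt_zero]) k
      omega
    have hconc := vee_eq_left hmain
    exact ⟨hconc, fun hh => hh.1 hconc⟩
  · intro _ h2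
    have hdc : ∀ k, cnt d k ≤ cnt c k := of_wedge_eq h2
    apply wedge_eq_right
    intro k
    rw [cnt_vee (wedge b c) d k, cnt_wedge b c k, cnt_vee b c k,
      Mf_congr_fun (T := fun j => cnt d j - cnt (wedge b c) j)
        (T' := fun j => cnt d j - (cnt c j - Mf (fun i => cnt c i - cnt b i) j))
        (fun j => by simp only [cnt_wedge])]
    have hW : Mf (fun j => cnt d j - (cnt c j - Mf (fun i => cnt c i - cnt b i) j)) k
        ≤ Mf (fun i => cnt c i - cnt b i) k := by
      apply Mf_le (Mf_nonneg _ k)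
      intro j hj
      have h1 := hdc j
      have h2 := Mf_mono (fun i => cnt c i - cnt b i) hj
      omega
    have hcb : cnt c k - cnt b k ≤ Mf (fun i => cnt c i - cnt b i) k :=
      le_Mf (by simp [cnt_zero]) k
    omega
end

section
/- For n ≥ 3 the operations ∨ and ∧ on columns over A = {1,…,n} are not associative: there exist columns a, b, c with (a ∨ b) ∨ c ≠ a ∨ (b ∨ c), and there exist columns a, b, c with (a ∧ b) ∧ c ≠ a ∧ (b ∧ c). -/
lemma colMatch_empty {n : ℕ} (b : Finset (Fin n)) : colMatch ∅ b = ∅ := by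
  simp [colMatch]

lemma colMatch_single {n : ℕ} (x y : Fin n) :
    colMatch {x} {y} = if x ≤ y then {y} else ∅ := by
  simp only [colMatch, Finset.sort_singleton, List.foldl_cons, List.foldl_nil, matchStep]
  by_cases h : x ≤ y
  · rw [Finset.filter_singleton, if_pos h]
    rw [dif_pos (Finset.singleton_nonempty y)]
    simp [h]
  · rw [Finset.filter_singleton, if_neg h]
    rw [dif_neg (by simp)]

lemma colMatch_single_min {n : ℕ} (z : Fin n) (s : Finset (Fin n))
    (hmem : z ∈ s) (hz : ∀ y, z ≤ y) : colMatch {z} s = {z} := by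
  have hfil : s.filter (fun y => z ≤ y) = s := Finset.filter_true_of_mem (fun y _ => hz y)
  have hne : (s.filter (fun y => z ≤ y)).Nonempty := by
    rw [hfil]; exact ⟨z, hmem⟩
  have hmin : (s.filter (fun y => z ≤ y)).min' hne = z := by
    refine le_antisymm (Finset.min'_le _ z (by rw [hfil]; exact hmem)) ?_
    exact Finset.le_min' _ _ _ (fun y _ => hz y)
  simp only [colMatch, Finset.sort_singleton, List.foldl_cons, List.foldl_nil, matchStep]
  rw [dif_pos hne, hmin]
  rfl

/-- For `n ≥ 3` the operations `∨` and `∧` on columns over `A = {1,…,n}` are not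
associative: there exist columns `a, b, c` with `(a ∨ b) ∨ c ≠ a ∨ (b ∨ c)`, and
there exist columns `a, b, c` with `(a ∧ b) ∧ c ≠ a ∧ (b ∧ c)`. -/
theorem vee_wedge_not_associative (n : ℕ) (hn : 3 ≤ n) :
    (∃ a b c : Finset (Fin n), vee (vee a b) c ≠ vee a (vee b c)) ∧
    (∃ a b c : Finset (Fin n), wedge (wedge a b) c ≠ wedge a (wedge b c)) := by
  set z : Fin n := ⟨0, by omega⟩ with hzdef
  set o : Fin n := ⟨1, by omega⟩ with hodef
  have hzle : ∀ y : Fin n, z ≤ y := fun y => by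
    simp [hzdef, Fin.le_def]
  have hzo : z ≤ o := hzle o
  have hoz : ¬ (o ≤ z) := by simp [hzdef, hodef, Fin.le_def]
  have hne : o ≠ z := by simp [hzdef, hodef, Fin.ext_iff]
  constructor
  · refine ⟨{z}, {o}, {z}, ?_⟩
    have h1 : vee {z} {o} = {z} := by
      rw [vee, colMatch_single, if_pos hzo]; simp
    have h2 : vee {z} {z} = {z} := by
      rw [vee, colMatch_single, if_pos (le_refl z)]; simp
    have h3 : vee {o} {z} = insert o {z} := by
      rw [vee, colMatch_single, if_neg hoz]
      rw [Finset.sdiff_empty, ← Finset.insert_eq]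
    have h4 : colMatch {z} (insert o {z}) = {z} :=
      colMatch_single_min z _ (by simp) hzle
    have h5 : vee {z} (insert o {z}) = insert o {z} := by
      rw [vee, h4]
      ext t
      simp
    rw [h1, h2, h3, h5]
    intro hcontra
    have : o ∈ ({z} : Finset (Fin n)) := hcontra ▸ Finset.mem_insert_self o {z}
    simp only [Finset.mem_singleton] at this
    exact hne this
  · refine ⟨{o}, {z}, {o}, ?_⟩
    have h1 : wedge {o} {z} = ∅ := by
      rw [wedge, colMatch_single, if_neg hoz]
    have h2 : wedge (∅ : Finset (Fin n)) {o} = ∅ := colMatch_empty _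
    have h3 : wedge {z} {o} = {o} := by
      rw [wedge, colMatch_single, if_pos hzo]
    have h4 : wedge {o} {o} = {o} := by
      rw [wedge, colMatch_single, if_pos (le_refl o)]
    rw [h1, h2, h3, h4]
    intro hcontra
    exact (Finset.singleton_ne_empty o) hcontra.symm
end

section
/- Fix a letter i ∈ A. The 1-cocycle D_i is not a coboundary (the derivation ∂/∂e_i is not inner): there is no element w ∈ k[Pl(A)] such that D_i(a) = w·a − a·w in k[Pl(A)] for every column a over A. -/
/-- The plactic congruence on the free monoid on `A`, generated by the Knuth relations. -/
def placticCon (n : ℕ) : Con (FreeMonoid (Fin n)) :=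
  conGen (fun w₁ w₂ => ∃ x y z : Fin n,
    (x ≤ y ∧ y < z ∧ w₁ = FreeMonoid.ofList [x, z, y] ∧ w₂ = FreeMonoid.ofList [z, x, y]) ∨
    (x < y ∧ y ≤ z ∧ w₁ = FreeMonoid.ofList [y, z, x] ∧ w₂ = FreeMonoid.ofList [y, x, z]))

/-- The plactic monoid `Pl(A)` on `A = {1, …, n}`. -/
abbrev Pl (n : ℕ) := (placticCon n).Quotient

/-- The element of the plactic monoid represented by a column. -/
def colElem {n : ℕ} (a : Finset (Fin n)) : Pl n :=
  (placticCon n).mk' (FreeMonoid.ofList (colWord a))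

/-- The Anick 1-cochain `∂/∂e_i` with values in the plactic monoid algebra `k[Pl(A)]`:
`D_i a` is the class of the column `a ∖ {i}` if `i ∈ a`, and `0` otherwise. -/
noncomputable def D (K : Type) [Field K] {n : ℕ} (i : Fin n) (a : Finset (Fin n)) :
    MonoidAlgebra K (Pl n) :=
  if i ∈ a then MonoidAlgebra.of K (Pl n) (colElem (a.erase i)) else 0

/-- Fix a letter `i ∈ A`. The 1-cocycle `D_i` is not a coboundary (the derivation
`∂/∂e_i` is not inner): there is no `w ∈ k[Pl(A)]` such that `D_i(a) = w·a − a·w`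
for every column `a` over `A`. -/
theorem D_not_inner (K : Type) [Field K] (n : ℕ) (hn : 1 ≤ n) (i : Fin n) :
    ¬ ∃ w : MonoidAlgebra K (Pl n), ∀ a : Finset (Fin n),
        D K i a = w * MonoidAlgebra.of K (Pl n) (colElem a) -
          MonoidAlgebra.of K (Pl n) (colElem a) * w := by
  rintro ⟨w, hw⟩
  have hwi := hw {i}
  have hD : D K i {i} = MonoidAlgebra.of K (Pl n) (colElem (({i} : Finset (Fin n)).erase i)) := by
    simp [D]
  rw [hD] at hwi
  -- augmentation
  let φ : MonoidAlgebra K (Pl n) →ₐ[K] K := MonoidAlgebra.lift K K (Pl n) 1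
  have := congrArg φ hwi
  simp only [map_sub, map_mul, MonoidAlgebra.lift_of, MonoidHom.one_apply,
    mul_comm, sub_self] at this
  simp [φ, MonoidAlgebra.lift_of] at this
end
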